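/- arXiv:1908.09196 — 6 statements merged into one kernel-verified Lean document; each statement's English description precedes it below -/
import Mathlib

section
/- Let h ∈ ℤ with h ≠ 1 and let n ≥ 1 be an integer. Let a, b ∈ ℂ((t)) with a non-constant, satisfying a'(t) = n·t^{n(1−h)−1}·b(t) in ℂ((t)). Assume the pair (a, b) is irreducible, i.e., there is no integer m ≥ 2 such that every j ∈ ℤ with a_j ≠ 0 is divisible by m and every j ∈ ℤ with b_j ≠ 0 is divisible by m. Then there is no integer m ≥ 2 which divides n and which divides every j ∈ ℤ with a_j ≠ 0; equivalently, n is the ramification order of the formal Puiseux series y(x) = a(x^{1/n}), i.e., the least n' ≥ 1 with y ∈ ℂ((x^{1/n'})). -/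
/-!
Comparing coefficients of `t^(N + k)`, `N = n(1-h) - 1`, in `a' = n t^N b` gives
`(n(1-h) + k) a_{n(1-h)+k} = n b_k`. Hence every exponent `k` of `b` is the exponent
`n(1-h) + k` of `a` shifted by a multiple of `n`, so a common divisor of `n` and of the
exponents of `a` also divides the exponents of `b`, which irreducibility forbids.
-/

/-- Formal derivative of a formal Laurent series: the coefficient of `t^j` in `a'`
is `(j+1) * a_{j+1}`. -/
noncomputable def lderiv (a : LaurentSeries ℂ) : LaurentSeries ℂ where
  coeff j := ((j + 1 : ℤ) : ℂ) * a.coeff (j + 1)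
  isPWO_support' := by
    have hsub : Function.support (fun j : ℤ => ((j + 1 : ℤ) : ℂ) * a.coeff (j + 1)) ⊆
        (fun j : ℤ => j - 1) '' a.support := by
      intro j hj
      have : a.coeff (j + 1) ≠ 0 := by
        intro h
        apply hj
        simp [Function.mem_support, h]
      exact ⟨j + 1, this, by ring⟩
    exact (a.isPWO_support.image_of_monotone (fun x y h => by omega)).mono hsub

theorem coeff_lderiv (a : LaurentSeries ℂ) (j : ℤ) :
    (lderiv a).coeff j = ((j + 1 : ℤ) : ℂ) * a.coeff (j + 1) :=
  rfl

theorem LaurentSeries.coeff_natCast_mul_single_one_mul_add {R : Type*} [Semiring R]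
    (n : ℕ) (N k : ℤ) (b : LaurentSeries R) :
    ((n : LaurentSeries R) * HahnSeries.single N (1 : R) * b).coeff (k + N) =
      n * b.coeff k := by
  rw [← map_natCast (HahnSeries.C : R →+* LaurentSeries R) n, HahnSeries.C_apply,
    HahnSeries.single_mul_single, zero_add, mul_one, HahnSeries.coeff_single_mul_add]

theorem coeff_ne_zero_of_lderiv_eq_natCast_mul_single_mul {n : ℕ} (hn : n ≠ 0) {N : ℤ}
    {a b : LaurentSeries ℂ}
    (hab : lderiv a = (n : LaurentSeries ℂ) * HahnSeries.single N (1 : ℂ) * b)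
    {k : ℤ} (hk : b.coeff k ≠ 0) :
    a.coeff (k + N + 1) ≠ 0 := by
  have hcoeff : ((k + N + 1 : ℤ) : ℂ) * a.coeff (k + N + 1) = n * b.coeff k := by
    rw [← coeff_lderiv, hab, LaurentSeries.coeff_natCast_mul_single_one_mul_add]
  intro ha
  rw [ha, mul_zero, eq_comm] at hcoeff
  exact mul_ne_zero (Nat.cast_ne_zero.mpr hn) hk hcoeff

theorem ramification_order_of_solution_parametrization_general
    (h : ℤ) (n : ℕ) (hn : 1 ≤ n)
    (a b : LaurentSeries ℂ)
    (hab : lderiv a =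
      (n : LaurentSeries ℂ) * HahnSeries.single ((n : ℤ) * (1 - h) - 1) (1 : ℂ) * b)
    (hirr : ¬ ∃ m : ℕ, 2 ≤ m ∧ (∀ j : ℤ, a.coeff j ≠ 0 → (m : ℤ) ∣ j) ∧
      (∀ j : ℤ, b.coeff j ≠ 0 → (m : ℤ) ∣ j)) :
    ¬ ∃ m : ℕ, 2 ≤ m ∧ m ∣ n ∧ ∀ j : ℤ, a.coeff j ≠ 0 → (m : ℤ) ∣ j := by
  rintro ⟨m, hm2, hmn, hma⟩
  refine hirr ⟨m, hm2, hma, fun k hk => ?_⟩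
  have hshift : (m : ℤ) ∣ k + ((n : ℤ) * (1 - h) - 1) + 1 :=
    hma _ (coeff_ne_zero_of_lderiv_eq_natCast_mul_single_mul (by omega) hab hk)
  rw [show k + ((n : ℤ) * (1 - h) - 1) + 1 = k + n * (1 - h) by ring] at hshift
  exact (dvd_add_left ((Int.natCast_dvd_natCast.mpr hmn).mul_right _)).mp hshift

/-- If `(a, b)` is an irreducible pair of Laurent series satisfying
`a'(t) = n t^{n(1-h)-1} b(t)`, then no integer `m ≥ 2` divides `n` together with
all exponents appearing in `a`; i.e. `n` is the ramification order of
`y(x) = a(x^{1/n})`. -/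
theorem ramification_order_of_solution_parametrization
    (h : ℤ) (hh : h ≠ 1) (n : ℕ) (hn : 1 ≤ n)
    (a b : LaurentSeries ℂ) (ha : ∀ c : ℂ, a ≠ HahnSeries.C c)
    (hab : lderiv a =
      (n : LaurentSeries ℂ) * HahnSeries.single ((n : ℤ) * (1 - h) - 1) (1 : ℂ) * b)
    (hirr : ¬ ∃ m : ℕ, 2 ≤ m ∧ (∀ j : ℤ, a.coeff j ≠ 0 → (m : ℤ) ∣ j) ∧
      (∀ j : ℤ, b.coeff j ≠ 0 → (m : ℤ) ∣ j)) :
    ¬ ∃ m : ℕ, 2 ≤ m ∧ m ∣ n ∧ ∀ j : ℤ, a.coeff j ≠ 0 → (m : ℤ) ∣ j :=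
  ramification_order_of_solution_parametrization_general h n hn a b hab hirr
end

section
/- Let ν ≥ 1 be an integer. A formal power series s ∈ ℂ[[t]] with ord(s) = 1 satisfies s(t)^{ν−1}·s'(t) = t^{ν−1} if and only if s(t) = α·t for some α ∈ ℂ with α^ν = 1. In particular, this equation has exactly ν solutions s ∈ ℂ[[t]] with ord(s) = 1. -/
/-!
Differentiating `s ^ ν` turns the equation into `d/dt (s ^ ν) = d/dt (t ^ ν)`; as both sides
vanish at `0`, this says `s ^ ν = t ^ ν`. Writing `s = t v`, we get `v ^ ν = 1`, so
`ν v ^ (ν - 1) v' = 0` and `v' = 0`: `v` is a constant `α` with `α ^ ν = 1`.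
-/

open PowerSeries

theorem Derivation.map_eq_zero_of_pow_eq_one {R A : Type*} [CommSemiring R] [CommRing A]
    [Algebra R A] [IsAddTorsionFree A] (D : Derivation R A A) {a : A} {n : ℕ} (hn : n ≠ 0)
    (ha : a ^ n = 1) : D a = 0 := by
  have hpow : n • a ^ (n - 1) • D a = 0 := by
    rw [← D.leibniz_pow, ha, D.map_one_eq_zero]
  have hnsmul : n • D a = 0 :=
    calc n • D a = a • n • a ^ (n - 1) • D a := by
          rw [smul_comm a, smul_smul, ← pow_succ', Nat.sub_add_cancel (Nat.pos_of_ne_zero hn),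
            ha, one_smul]
      _ = 0 := by rw [hpow, smul_zero]
  exact (nsmul_eq_zero_iff.mp hnsmul).resolve_right hn

namespace PowerSeries

instance instIsAddTorsionFree {R : Type*} [Semiring R] [IsAddTorsionFree R] :
    IsAddTorsionFree R⟦X⟧ :=
  inferInstanceAs (IsAddTorsionFree ((Unit →₀ ℕ) → R))

theorem order_C_mul_X {R : Type*} [Semiring R] {a : R} (ha : a ≠ 0) : (C a * X).order = 1 := by
  rw [← pow_one X, ← monomial_eq_C_mul_X_pow, order_monomial_of_ne_zero _ _ ha, Nat.cast_one]

section TorsionFree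

variable {R : Type*} [CommRing R] [IsAddTorsionFree R]

theorem eq_C_of_pow_eq_one {v : R⟦X⟧} {n : ℕ} (hn : n ≠ 0) (hv : v ^ n = 1) :
    v = C (constantCoeff v) :=
  derivative.ext (by rw [(d⁄dX R).map_eq_zero_of_pow_eq_one hn hv, derivative_C]) (by simp)

theorem pow_sub_one_mul_derivative_eq_iff {f g : R⟦X⟧} {n : ℕ} (hn : n ≠ 0)
    (hc : constantCoeff f ^ n = constantCoeff g ^ n) :
    f ^ (n - 1) * d⁄dX R f = g ^ (n - 1) * d⁄dX R g ↔ f ^ n = g ^ n := by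
  have hd (h : R⟦X⟧) : d⁄dX R (h ^ n) = n • (h ^ (n - 1) * d⁄dX R h) := by
    rw [Derivation.leibniz_pow, smul_eq_mul]
  rw [← (nsmul_right_injective hn).eq_iff, ← hd, ← hd]
  exact ⟨fun h ↦ derivative.ext h (by simpa only [map_pow] using hc), congrArg _⟩

theorem pow_sub_one_mul_derivative_eq_X_pow_sub_one_iff {f : R⟦X⟧} {n : ℕ} (hn : n ≠ 0)
    (hf : constantCoeff f = 0) :
    f ^ (n - 1) * d⁄dX R f = X ^ (n - 1) ↔ f ^ n = X ^ n := by
  rw [← pow_sub_one_mul_derivative_eq_iff hn (by simp [hf]), derivative_X, mul_one]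

variable [IsDomain R]

theorem pow_eq_X_pow_iff {s : R⟦X⟧} {n : ℕ} (hn : n ≠ 0) :
    s ^ n = X ^ n ↔ ∃ a : R, a ^ n = 1 ∧ s = C a * X := by
  constructor
  · intro hs
    have hc : constantCoeff s = 0 :=
      (pow_eq_zero_iff hn).mp (by rw [← map_pow, hs, map_pow, constantCoeff_X, zero_pow hn])
    obtain ⟨v, rfl⟩ := X_dvd_iff.mpr hc
    have hv : v ^ n = 1 :=
      mul_left_cancel₀ (pow_ne_zero n X_ne_zero) (by rw [← mul_pow, hs, mul_one])
    exact ⟨constantCoeff v, by rw [← map_pow, hv, map_one],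
      by rw [mul_comm, ← eq_C_of_pow_eq_one hn hv]⟩
  · rintro ⟨a, ha, rfl⟩
    rw [mul_pow, ← map_pow, ha, map_one, one_mul]

end TorsionFree

end PowerSeries

theorem Complex.ncard_setOf_pow_eq_one {n : ℕ} (hn : n ≠ 0) : {a : ℂ | a ^ n = 1}.ncard = n := by
  have hroots : {a : ℂ | a ^ n = 1} = ↑(Polynomial.nthRootsFinset n (1 : ℂ)) := by
    ext a
    simp [Polynomial.mem_nthRootsFinset (Nat.pos_of_ne_zero hn)]
  rw [hroots, Set.ncard_coe_finset]
  exact (isPrimitiveRoot_exp n hn).card_nthRootsFinset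

/-- For `ν ≥ 1`, an order-one formal power series `s` satisfies
`s(t)^{ν-1} s'(t) = t^{ν-1}` if and only if `s(t) = α t` with `α^ν = 1`;
in particular this equation has exactly `ν` order-one solutions. -/
theorem order_one_solutions_of_separable_equation (ν : ℕ) (hν : 1 ≤ ν) :
    (∀ s : PowerSeries ℂ, s.order = 1 →
      (s ^ (ν - 1) * s.derivativeFun = PowerSeries.X ^ (ν - 1) ↔
        ∃ α : ℂ, α ^ ν = 1 ∧ s = PowerSeries.C α * PowerSeries.X)) ∧
    {s : PowerSeries ℂ | s.order = 1 ∧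
      s ^ (ν - 1) * s.derivativeFun = PowerSeries.X ^ (ν - 1)}.ncard = ν := by
  have hν0 : ν ≠ 0 := Nat.one_le_iff_ne_zero.mp hν
  have solutions (s : ℂ⟦X⟧) (hs : s.order = 1) :
      s ^ (ν - 1) * s.derivativeFun = X ^ (ν - 1) ↔ ∃ α : ℂ, α ^ ν = 1 ∧ s = C α * X := by
    have hderiv : s.derivativeFun = d⁄dX ℂ s := rfl
    rw [hderiv, pow_sub_one_mul_derivative_eq_X_pow_sub_one_iff hν0
      (one_le_order_iff_constCoeff_eq_zero.mp hs.ge), pow_eq_X_pow_iff hν0]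
  refine ⟨solutions, ?_⟩
  have hset : {s : ℂ⟦X⟧ | s.order = 1 ∧ s ^ (ν - 1) * s.derivativeFun = X ^ (ν - 1)} =
      (fun α ↦ C α * X) '' {α : ℂ | α ^ ν = 1} := by
    ext s
    constructor
    · rintro ⟨hs, heq⟩
      obtain ⟨α, hα, rfl⟩ := (solutions s hs).mp heq
      exact ⟨α, hα, rfl⟩
    · rintro ⟨α, hα, rfl⟩
      have hord := order_C_mul_X (ne_zero_pow hν0 (hα ▸ one_ne_zero))
      exact ⟨hord, (solutions _ hord).mpr ⟨α, hα, rfl⟩⟩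
  rw [hset, Set.ncard_image_of_injective _ fun a b h ↦ C_injective (mul_right_cancel₀ X_ne_zero h),
    Complex.ncard_setOf_pow_eq_one hν0]
end

section
/- Let μ ≥ 1 be an integer. The set of formal power series s ∈ ℂ[[t]] with ord(s) = 1 satisfying t^{μ+1}·s'(t) = s(t)^{μ+1} is infinite. -/
/-!
Along a solution `s^(-μ) - t^(-μ)` is constant, which suggests the family
`s = t (1 + c t^μ)^(-1/μ)`, `c ∈ ℂ`. Formally, `u = (1 + c t^μ)^(-1/μ)` is the binomial series
substituted at `c t^μ`, and the relation `u^μ (1 + c t^μ) = 1` alone shows that `t u` solves the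
equation, has order one, and determines `c`.
-/

open PowerSeries

namespace PowerSeries

theorem binomialSeries_pow {R A : Type*} [CommRing R] [BinomialRing R] [Ring A] [Algebra R A]
    (r : R) (n : ℕ) : binomialSeries A r ^ n = binomialSeries A (n * r) := by
  induction n with
  | zero => simp
  | succ n ih => rw [pow_succ, ih, ← binomialSeries_add]; push_cast; ring_nf

theorem subst_binomialSeries_pow_mul_one_add {A : Type*} [CommRing A] [Algebra ℚ A] {n : ℕ}
    (hn : n ≠ 0) {g : A⟦X⟧} (hg : constantCoeff g = 0) :
    (binomialSeries A (-(n : ℚ)⁻¹)).subst g ^ n * (1 + g) = 1 := by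
  have hsubst : HasSubst g := HasSubst.of_constantCoeff_zero' hg
  have h1X : 1 + g = substAlgHom hsubst (binomialSeries A ((1 : ℕ) : ℚ)) := by
    rw [binomialSeries_nat, pow_one, map_add, map_one, substAlgHom_X]
  rw [← coe_substAlgHom hsubst, h1X, ← map_pow, ← map_mul, binomialSeries_pow,
    ← binomialSeries_add]
  simp [hn]

section Domain

variable {R : Type*} [CommRing R] [IsDomain R]

theorem order_X_mul_of_isUnit {u : R⟦X⟧} (hu : IsUnit u) : (X * u).order = 1 := by
  rw [order_mul, order_X, order_zero_of_unit hu, add_zero]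

theorem X_pow_succ_mul_derivative_X_mul [CharZero R] {n : ℕ} (hn : n ≠ 0) {c : R} {u : R⟦X⟧}
    (hu : u ^ n * (1 + C c * X ^ n) = 1) :
    X ^ (n + 1) * d⁄dX R (X * u) = (X * u) ^ (n + 1) := by
  obtain ⟨m, rfl⟩ : ∃ m, n = m + 1 := ⟨n - 1, by omega⟩
  have hu0 : u ≠ 0 := by rintro rfl; simp at hu
  have hv0 : (1 + C c * X ^ (m + 1) : R⟦X⟧) ≠ 0 := by rintro h; simp [h] at hu
  have hm0 : (m + 1 : R⟦X⟧) ≠ 0 := fun h ↦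
    Nat.cast_add_one_ne_zero (R := R) m (by simpa using congrArg constantCoeff h)
  -- differentiating `hu` and cancelling `(m + 1) * u ^ m` leaves a linear ODE for `u`
  have hlin : d⁄dX R u * (1 + C c * X ^ (m + 1)) + C c * X ^ m * u = 0 := by
    have hd := congrArg (d⁄dX R) hu
    simp only [Derivation.leibniz, derivative_pow, map_add, Derivation.map_one_eq_zero,
      derivative_C, derivative_X, smul_eq_mul, Nat.add_sub_cancel] at hd
    have : ((m + 1 : ℕ) : R⟦X⟧) * u ^ m *
        (d⁄dX R u * (1 + C c * X ^ (m + 1)) + C c * X ^ m * u) = 0 := by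
      linear_combination hd
    simpa [hu0, hm0] using this
  have hkey : u + X * d⁄dX R u = u ^ (m + 1 + 1) := by
    refine mul_right_cancel₀ hv0 ?_
    linear_combination X * hlin - u * hu
  rw [Derivation.leibniz, derivative_X, smul_eq_mul, smul_eq_mul, mul_one, mul_pow, ← hkey]
  ring

end Domain

theorem eq_of_pow_mul_one_add_C_mul_X_pow_eq_one {R : Type*} [CommRing R] {n : ℕ} {u : R⟦X⟧}
    {c c' : R} (h : u ^ n * (1 + C c * X ^ n) = 1) (h' : u ^ n * (1 + C c' * X ^ n) = 1) :
    c = c' := by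
  have heq : (1 + C c * X ^ n : R⟦X⟧) = 1 + C c' * X ^ n :=
    calc _ = u ^ n * (1 + C c' * X ^ n) * (1 + C c * X ^ n) := by rw [h', one_mul]
      _ = u ^ n * (1 + C c * X ^ n) * (1 + C c' * X ^ n) := by ring
      _ = _ := by rw [h, one_mul]
  simpa using congrArg (coeff n) heq

end PowerSeries

/-- For `μ ≥ 1`, there are infinitely many order-one formal power series `s`
satisfying `t^{μ+1} s'(t) = s(t)^{μ+1}`. -/
theorem infinitely_many_order_one_solutions (μ : ℕ) (hμ : 1 ≤ μ) :
    {s : PowerSeries ℂ | s.order = 1 ∧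
      PowerSeries.X ^ (μ + 1) * s.derivativeFun = s ^ (μ + 1)}.Infinite := by
  have hμ0 : μ ≠ 0 := by omega
  obtain ⟨u, hu⟩ : ∃ u : ℂ → ℂ⟦X⟧, ∀ c, u c ^ μ * (1 + C c * X ^ μ) = 1 :=
    ⟨_, fun c ↦ subst_binomialSeries_pow_mul_one_add hμ0 (by simp [hμ0])⟩
  refine Set.infinite_of_injective_forall_mem (f := fun c ↦ X * u c) (fun c c' h ↦ ?_) fun c ↦
    ⟨order_X_mul_of_isUnit ((isUnit_pow_iff hμ0).mp (.of_mul_eq_one _ (hu c))),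
      X_pow_succ_mul_derivative_X_mul hμ0 (hu c)⟩
  have huc : u c = u c' := mul_left_cancel₀ X_ne_zero h
  exact eq_of_pow_mul_one_add_C_mul_X_pow_eq_one (hu c) (huc ▸ hu c')
end

section
/- Let f, g ∈ ℂ[[t,z]] be formal power series in two variables with g(0,0) ≠ 0 and f(0,0) = 0, and set λ := (∂f/∂z)(0,0)/g(0,0). If λ is not a positive integer, then there exists exactly one formal power series z ∈ ℂ[[t]] with zero constant term satisfying the Briot–Bouquet equation g(t, z(t))·t·z'(t) = f(t, z(t)) in ℂ[[t]]. -/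
/-!
Write `θ = t d/dt` and `Φ(z) = g(t, z)·θz − f(t, z)`. If `z ≡ w mod tⁿ` (both without constant
term), then `Φ(z) − Φ(w) ≡ (n g₀₀ − f₀₁)(z − w) mod tⁿ⁺¹`: modulo `tⁿ⁺¹` the order-`n` part of
`z − w` is seen only by the linear term `f₀₁ z` of `f` and by the constant term `g₀₀` of `g`, and
`θ` multiplies it by `n`. As `λ = f₀₁ / g₀₀` is not a positive integer, `n g₀₀ − f₀₁ ≠ 0` for
`n ≥ 1`, so the coefficients of a zero of `Φ` are forced one at a time (uniqueness), and a
Newton-type correction at each order produces a `t`-adically convergent sequence whose limit is a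
zero of `Φ` (existence).
-/

/-- The coefficient `f_{i,j}` of `t^i z^j` in a two-variable formal power series,
where variable `0` is `t` and variable `1` is `z`. -/
noncomputable def fcoeff (f : MvPowerSeries (Fin 2) ℂ) (i j : ℕ) : ℂ :=
  MvPowerSeries.coeff (Finsupp.single 0 i + Finsupp.single 1 j) f

/-- Substitution `f(t, z(t))` (intended for `z` with zero constant term, in which
case `coeff n (X^i * z^j) = 0` for `i + j > n`). -/
noncomputable def subst2 (f : MvPowerSeries (Fin 2) ℂ) (z : PowerSeries ℂ) : PowerSeries ℂ :=
  PowerSeries.mk fun n => ∑ i ∈ Finset.range (n + 1), ∑ j ∈ Finset.range (n + 1),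
    fcoeff f i j * (PowerSeries.coeff n) (PowerSeries.X ^ i * z ^ j)

open PowerSeries

section CommRing

variable {R : Type*} [CommRing R]

theorem pow_add_dvd_pow_succ_sub_pow_succ {a z w : R} (hz : a ∣ z) (hw : a ∣ w) {n : ℕ}
    (h : a ^ n ∣ z - w) (j : ℕ) : a ^ (n + j) ∣ z ^ (j + 1) - w ^ (j + 1) := by
  rw [← geom_sum₂_mul, add_comm n, pow_add]
  refine mul_dvd_mul (Finset.dvd_sum fun i hi => ?_) h
  have hij : i ≤ j := Nat.lt_succ_iff.mp (Finset.mem_range.mp hi)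
  calc a ^ j = a ^ i * a ^ (j + 1 - 1 - i) := by rw [← pow_add]; congr 1; omega
    _ ∣ z ^ i * w ^ (j + 1 - 1 - i) :=
      mul_dvd_mul (pow_dvd_pow_of_dvd hz i) (pow_dvd_pow_of_dvd hw _)

theorem pow_succ_dvd_pow_mul_pow_sub_pow_mul_pow {a z w : R} (hz : a ∣ z) (hw : a ∣ w) {n : ℕ}
    (h : a ^ n ∣ z - w) {i j : ℕ} (hij : (i, j) ≠ (0, 1)) :
    a ^ (n + 1) ∣ a ^ i * z ^ j - a ^ i * w ^ j := by
  rw [← mul_sub]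
  rcases j with _ | j
  · simp
  · have hle : n + 1 ≤ i + (n + j) := by
      by_contra hlt
      exact hij (Prod.ext (by omega) (by omega))
    calc a ^ (n + 1) ∣ a ^ (i + (n + j)) := pow_dvd_pow a hle
      _ = a ^ i * a ^ (n + j) := pow_add a i (n + j)
      _ ∣ a ^ i * (z ^ (j + 1) - w ^ (j + 1)) :=
        mul_dvd_mul_left _ (pow_add_dvd_pow_succ_sub_pow_succ hz hw h j)

end CommRing

namespace PowerSeries

section CommRing

variable {R : Type*} [CommRing R]

theorem eq_zero_of_forall_X_pow_dvd {p : R⟦X⟧} (h : ∀ n, X ^ n ∣ p) : p = 0 := by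
  ext n
  exact X_pow_dvd_iff.mp (h (n + 1)) n n.lt_succ_self

theorem X_pow_succ_dvd_sub_C_coeff_mul_X_pow {p : R⟦X⟧} {n : ℕ} (h : X ^ n ∣ p) :
    X ^ (n + 1) ∣ p - C (coeff n p) * X ^ n := by
  rw [X_pow_dvd_iff] at h ⊢
  intro m hm
  rw [map_sub, coeff_C_mul_X_pow]
  rcases (Nat.lt_succ_iff.mp hm).lt_or_eq with hm | rfl
  · simp [h m hm, hm.ne]
  · simp

theorem coeff_X_mul_derivative (p : R⟦X⟧) (n : ℕ) :
    coeff n (X * d⁄dX R p) = n * coeff n p := by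
  cases n with
  | zero => simp
  | succ n => rw [coeff_succ_X_mul, coeff_derivative]; push_cast; ring

theorem X_pow_succ_dvd_X_mul_derivative_sub {u : R⟦X⟧} {n : ℕ} (h : X ^ n ∣ u) :
    X ^ (n + 1) ∣ X * d⁄dX R u - C (n : R) * u := by
  rw [X_pow_dvd_iff] at h ⊢
  intro m hm
  rw [map_sub, coeff_X_mul_derivative, coeff_C_mul]
  rcases (Nat.lt_succ_iff.mp hm).lt_or_eq with hm | rfl
  · simp [h m hm]
  · ring

theorem exists_forall_X_pow_succ_dvd_sub {s : ℕ → R⟦X⟧}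
    (hs : ∀ n, X ^ (n + 1) ∣ s (n + 1) - s n) : ∃ z, ∀ n, X ^ (n + 1) ∣ z - s n := by
  have hcauchy : ∀ m n, m ≤ n → X ^ (m + 1) ∣ s n - s m := by
    intro m n hmn
    induction n, hmn using Nat.le_induction with
    | base => simp
    | succ n hmn ih =>
      rw [← sub_add_sub_cancel]
      exact dvd_add ((pow_dvd_pow X (by omega)).trans (hs n)) ih
  refine ⟨mk fun n => coeff n (s n), fun n => X_pow_dvd_iff.mpr fun m hm => ?_⟩
  rw [map_sub, coeff_mk, sub_eq_zero, eq_comm, ← sub_eq_zero, ← map_sub]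
  exact X_pow_dvd_iff.mp (hcauchy m n (by omega)) m m.lt_succ_self

def HasOrderwiseSlope (Φ : R⟦X⟧ → R⟦X⟧) (c : ℕ → R) : Prop :=
  ∀ n z w, X ∣ z → X ∣ w → X ^ n ∣ z - w → X ^ (n + 1) ∣ Φ z - Φ w - C (c n) * (z - w)

theorem HasOrderwiseSlope.X_pow_dvd_sub {Φ : R⟦X⟧ → R⟦X⟧} {c : ℕ → R}
    (hΦ : HasOrderwiseSlope Φ c) {n : ℕ} {z w : R⟦X⟧} (hz : X ∣ z) (hw : X ∣ w)
    (h : X ^ n ∣ z - w) : X ^ n ∣ Φ z - Φ w :=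
  (dvd_sub_left (dvd_mul_of_dvd_right h _)).mp
    ((pow_dvd_pow X n.le_succ).trans (hΦ n z w hz hw h))

end CommRing

section Field

variable {k : Type*} [Field k]

theorem HasOrderwiseSlope.eq_of_map_eq {Φ : k⟦X⟧ → k⟦X⟧} {c : ℕ → k}
    (hΦ : HasOrderwiseSlope Φ c) (hc : ∀ n, c (n + 1) ≠ 0) {z w : k⟦X⟧} (hz : X ∣ z)
    (hw : X ∣ w) (h : Φ z = Φ w) : z = w := by
  have hdvd : ∀ n, X ^ (n + 1) ∣ z - w := by
    intro n
    induction n with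
    | zero => simpa using dvd_sub hz hw
    | succ n ih =>
      have hstep := hΦ (n + 1) z w hz hw ih
      rwa [h, sub_self, zero_sub, dvd_neg, ((hc n).isUnit.map C).dvd_mul_left] at hstep
  exact sub_eq_zero.mp <| eq_zero_of_forall_X_pow_dvd fun n =>
    (pow_dvd_pow X n.le_succ).trans (hdvd n)

/-- When `HasOrderwiseSlope Φ c`, the correction term kills the coefficient of `X ^ (n + 1)`
in `Φ`. -/
noncomputable def approxZero (Φ : k⟦X⟧ → k⟦X⟧) (c : ℕ → k) : ℕ → k⟦X⟧
  | 0 => 0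
  | n + 1 => approxZero Φ c n - C (coeff (n + 1) (Φ (approxZero Φ c n)) / c (n + 1)) * X ^ (n + 1)

variable {Φ : k⟦X⟧ → k⟦X⟧} {c : ℕ → k}

theorem X_dvd_approxZero (n : ℕ) : X ∣ approxZero Φ c n := by
  induction n with
  | zero => exact dvd_zero X
  | succ n ih => exact dvd_sub ih (dvd_mul_of_dvd_right (dvd_pow_self X n.succ_ne_zero) _)

theorem approxZero_succ_sub (n : ℕ) :
    approxZero Φ c (n + 1) - approxZero Φ c n =
      -(C (coeff (n + 1) (Φ (approxZero Φ c n)) / c (n + 1)) * X ^ (n + 1)) := by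
  rw [approxZero, sub_sub_cancel_left]

theorem X_pow_succ_dvd_approxZero_succ_sub (n : ℕ) :
    X ^ (n + 1) ∣ approxZero Φ c (n + 1) - approxZero Φ c n := by
  rw [approxZero_succ_sub]
  exact dvd_neg.mpr (dvd_mul_left _ _)

theorem HasOrderwiseSlope.X_pow_succ_dvd_map_approxZero (hΦ : HasOrderwiseSlope Φ c)
    (hc : ∀ n, c (n + 1) ≠ 0) (h0 : X ∣ Φ 0) (n : ℕ) : X ^ (n + 1) ∣ Φ (approxZero Φ c n) := by
  induction n with
  | zero => simpa [approxZero] using h0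
  | succ n ih =>
    set s := approxZero Φ c n
    have hstep := hΦ (n + 1) (approxZero Φ c (n + 1)) s (X_dvd_approxZero _)
      (X_dvd_approxZero _) (X_pow_succ_dvd_approxZero_succ_sub n)
    have hcorr : C (c (n + 1)) * (approxZero Φ c (n + 1) - s) =
        -(C (coeff (n + 1) (Φ s)) * X ^ (n + 1)) := by
      rw [approxZero_succ_sub, mul_neg, ← mul_assoc, ← map_mul, mul_div_cancel₀ _ (hc n)]
    rw [hcorr, sub_neg_eq_add] at hstep
    have hdecomp : Φ (approxZero Φ c (n + 1)) =
        (Φ (approxZero Φ c (n + 1)) - Φ s + C (coeff (n + 1) (Φ s)) * X ^ (n + 1)) +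
          (Φ s - C (coeff (n + 1) (Φ s)) * X ^ (n + 1)) := by ring
    rw [hdecomp]
    exact dvd_add hstep (X_pow_succ_dvd_sub_C_coeff_mul_X_pow ih)

theorem HasOrderwiseSlope.existsUnique_eq_zero (hΦ : HasOrderwiseSlope Φ c)
    (hc : ∀ n, c (n + 1) ≠ 0) (h0 : X ∣ Φ 0) : ∃! z, X ∣ z ∧ Φ z = 0 := by
  obtain ⟨z, hz⟩ := exists_forall_X_pow_succ_dvd_sub (X_pow_succ_dvd_approxZero_succ_sub (Φ := Φ))
  have hzX : X ∣ z := by simpa [approxZero] using hz 0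
  have hzero : Φ z = 0 := by
    refine eq_zero_of_forall_X_pow_dvd fun n => (pow_dvd_pow X n.le_succ).trans ?_
    have hn := dvd_add (hΦ.X_pow_dvd_sub hzX (X_dvd_approxZero n) (hz n))
      (hΦ.X_pow_succ_dvd_map_approxZero hc h0 n)
    rwa [sub_add_cancel] at hn
  exact ⟨z, ⟨hzX, hzero⟩, fun w ⟨hwX, hw⟩ => hΦ.eq_of_map_eq hc hwX hzX (hw.trans hzero.symm)⟩

end Field

end PowerSeries

theorem coeff_subst2 (F : MvPowerSeries (Fin 2) ℂ) (z : ℂ⟦X⟧) (n : ℕ) :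
    coeff n (subst2 F z) = ∑ p ∈ Finset.range (n + 1) ×ˢ Finset.range (n + 1),
      fcoeff F p.1 p.2 * coeff n (X ^ p.1 * z ^ p.2) := by
  rw [subst2, coeff_mk, Finset.sum_product]

theorem constantCoeff_subst2 (F : MvPowerSeries (Fin 2) ℂ) {z : ℂ⟦X⟧} (hz : X ∣ z) :
    constantCoeff (subst2 F z) = fcoeff F 0 0 := by
  rw [← coeff_zero_eq_constantCoeff_apply, subst2, coeff_mk]
  simp [X_dvd_iff.mp hz]

theorem X_pow_succ_dvd_subst2_sub (F : MvPowerSeries (Fin 2) ℂ) {z w : ℂ⟦X⟧} (hz : X ∣ z)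
    (hw : X ∣ w) {n : ℕ} (h : X ^ n ∣ z - w) :
    X ^ (n + 1) ∣ subst2 F z - subst2 F w - C (fcoeff F 0 1) * (z - w) := by
  refine X_pow_dvd_iff.mpr fun m hm => ?_
  rw [map_sub, map_sub, coeff_subst2, coeff_subst2, ← Finset.sum_sub_distrib, coeff_C_mul,
    sub_eq_zero]
  simp_rw [← mul_sub, ← map_sub]
  rw [Finset.sum_eq_single (0, 1)]
  · simp
  · intro p _ hp
    rw [X_pow_dvd_iff.mp (pow_succ_dvd_pow_mul_pow_sub_pow_mul_pow hz hw h hp) m hm, mul_zero]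
  · intro h01
    obtain rfl : m = 0 := by simpa [Finset.mem_product] using h01
    simp [X_dvd_iff.mp (dvd_sub hz hw)]

noncomputable def briotBouquetDefect (f g : MvPowerSeries (Fin 2) ℂ) (z : ℂ⟦X⟧) : ℂ⟦X⟧ :=
  subst2 g z * (X * d⁄dX ℂ z) - subst2 f z

theorem hasOrderwiseSlope_briotBouquetDefect (f g : MvPowerSeries (Fin 2) ℂ) :
    HasOrderwiseSlope (briotBouquetDefect f g) fun n => n * fcoeff g 0 0 - fcoeff f 0 1 := by
  intro n z w hz hw h
  have hg := X_pow_succ_dvd_subst2_sub g hz hw h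
  have hgn : X ^ n ∣ subst2 g z - subst2 g w :=
    (dvd_sub_left (dvd_mul_of_dvd_right h _)).mp ((pow_dvd_pow X n.le_succ).trans hg)
  have hgw : X ∣ subst2 g w - C (fcoeff g 0 0) := by
    rw [X_dvd_iff, map_sub, constantCoeff_subst2 g hw, constantCoeff_C, sub_self]
  have hθ := X_pow_succ_dvd_X_mul_derivative_sub h
  rw [map_sub, mul_sub] at hθ
  have hdecomp : briotBouquetDefect f g z - briotBouquetDefect f g w -
      C ((n : ℂ) * fcoeff g 0 0 - fcoeff f 0 1) * (z - w) =
      (subst2 g z - subst2 g w) * (X * d⁄dX ℂ z) +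
        subst2 g w * (X * d⁄dX ℂ z - X * d⁄dX ℂ w - C (n : ℂ) * (z - w)) +
        (subst2 g w - C (fcoeff g 0 0)) * (C (n : ℂ) * (z - w)) -
        (subst2 f z - subst2 f w - C (fcoeff f 0 1) * (z - w)) := by
    simp only [briotBouquetDefect, map_sub, map_mul]
    ring
  have hfirst : X ^ (n + 1) ∣ (subst2 g z - subst2 g w) * (X * d⁄dX ℂ z) :=
    pow_succ (X : ℂ⟦X⟧) n ▸ mul_dvd_mul hgn (dvd_mul_right X _)
  have hthird : X ^ (n + 1) ∣ (subst2 g w - C (fcoeff g 0 0)) * (C (n : ℂ) * (z - w)) :=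
    pow_succ' (X : ℂ⟦X⟧) n ▸ mul_dvd_mul hgw (dvd_mul_of_dvd_right h _)
  rw [hdecomp]
  exact dvd_sub (dvd_add (dvd_add hfirst (dvd_mul_of_dvd_right hθ _)) hthird)
    (X_pow_succ_dvd_subst2_sub f hz hw h)

theorem X_dvd_briotBouquetDefect_zero {f : MvPowerSeries (Fin 2) ℂ} (hf : fcoeff f 0 0 = 0)
    (g : MvPowerSeries (Fin 2) ℂ) : X ∣ briotBouquetDefect f g 0 := by
  rw [briotBouquetDefect, X_dvd_iff, map_sub, map_mul, constantCoeff_subst2 f (dvd_zero X), hf]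
  simp

/-- Briot–Bouquet: if `g(0,0) ≠ 0`, `f(0,0) = 0` and
`λ = f_{0,1}/g_{0,0}` is not a positive integer, then the equation
`g(t, z(t)) · t · z'(t) = f(t, z(t))` has exactly one formal power series
solution `z` with zero constant term. -/
theorem briot_bouquet_unique_solution
    (f g : MvPowerSeries (Fin 2) ℂ)
    (hg : fcoeff g 0 0 ≠ 0) (hf : fcoeff f 0 0 = 0)
    (hlambda : ∀ k : ℕ, 1 ≤ k → fcoeff f 0 1 / fcoeff g 0 0 ≠ (k : ℂ)) :
    ∃! z : PowerSeries ℂ, PowerSeries.constantCoeff z = 0 ∧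
      subst2 g z * (PowerSeries.X * z.derivativeFun) = subst2 f z := by
  have hslope : ∀ n : ℕ, ((n + 1 : ℕ) : ℂ) * fcoeff g 0 0 - fcoeff f 0 1 ≠ 0 := by
    intro n h
    refine hlambda (n + 1) n.succ_pos ?_
    rw [div_eq_iff hg]
    linear_combination -h
  have hzero := (hasOrderwiseSlope_briotBouquetDefect f g).existsUnique_eq_zero hslope
    (X_dvd_briotBouquetDefect_zero hf g)
  simp only [X_dvd_iff, briotBouquetDefect, sub_eq_zero] at hzero
  exact hzero
end

section
/- Let f, g ∈ ℂ[[t,z]] with g(0,0) ≠ 0 and f(0,0) = 0, and assume f and g are convergent, i.e., there exists r > 0 such that Σ_{i,j} |f_{i,j}|·r^{i+j} < ∞ and Σ_{i,j} |g_{i,j}|·r^{i+j} < ∞. Then every z ∈ ℂ[[t]] with zero constant term satisfying g(t, z(t))·t·z'(t) = f(t, z(t)) is convergent, i.e., has positive radius of convergence. -/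
/-!
In the degree-`n` coefficient of `g(t, z) t z' = f(t, z)` the coefficient `z_n` enters only
linearly, with factor `n g(0,0) - f_{0,1}`, which grows like `n`; everything else only depends on
`z_0, …, z_{n-1}`, so `z` may be replaced there by its truncation `y` below degree `n`.
We show `‖z_n‖ ≤ ε w_n` with `w_n = R^n / (n+1)^2` by strong induction. The weights `w` are
submultiplicative under convolution up to a factor `8`, so `y^j` is dominated by `(8ε)^j w`,
and the degree-`n` coefficient of `g(t, y) t y' - f(t, y)` is `O((ε + 1/R)(1 + nε)) w_n`.
Choosing `ε` small, then `n` beyond a threshold `N`, then `R` large (which also handles the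
finitely many `z_n` with `n < N`), this is at most `ε ‖n g(0,0) - f_{0,1}‖ w_n`.
-/

open PowerSeries Finset Filter Topology

namespace BriotBouquet

noncomputable def weight (R : ℝ) (n : ℕ) : ℝ := R ^ n / ((n : ℝ) + 1) ^ 2

lemma weight_nonneg {R : ℝ} (hR : 0 ≤ R) (n : ℕ) : 0 ≤ weight R n := by
  unfold weight; positivity

@[simp] lemma weight_zero (R : ℝ) : weight R 0 = 1 := by simp [weight]

lemma sum_range_inv_sq_le (n : ℕ) : ∑ k ∈ range n, (((k : ℝ) + 1) ^ 2)⁻¹ ≤ 2 := by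
  have h := sum_Ioo_inv_sq_le (α := ℝ) 0 (n + 1)
  rw [← Ico_add_one_left_eq_Ioo, ← sum_Ico_add', ← range_eq_Ico] at h
  simpa using h

/-- `(n+1)² ≤ 2((k+1)² + (l+1)²)` for `k + l = n` gives
`(k+1)⁻² (l+1)⁻² ≤ 2 (n+1)⁻² ((k+1)⁻² + (l+1)⁻²)`, and `∑ (k+1)⁻² ≤ 2`. -/
lemma sum_antidiagonal_weight_mul_le {R : ℝ} (hR : 0 ≤ R) (n : ℕ) :
    ∑ p ∈ antidiagonal n, weight R p.1 * weight R p.2 ≤ 8 * weight R n := by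
  set v : ℕ → ℝ := fun k => (((k : ℝ) + 1) ^ 2)⁻¹
  have hpair : ∀ p ∈ antidiagonal n, v p.1 * v p.2 ≤ 2 * v n * (v p.1 + v p.2) := by
    rintro ⟨k, l⟩ hkl
    rw [HasAntidiagonal.mem_antidiagonal] at hkl
    have hsq : ((n : ℝ) + 1) ^ 2 ≤ 2 * (((k : ℝ) + 1) ^ 2 + ((l : ℝ) + 1) ^ 2) := by
      rw [← hkl]; push_cast
      nlinarith [sq_nonneg ((k : ℝ) - l), k.cast_nonneg (α := ℝ), l.cast_nonneg (α := ℝ)]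
    simp only [v]
    rw [← sub_nonneg]
    have : 2 * ((n + 1 : ℝ) ^ 2)⁻¹ * (((k + 1 : ℝ) ^ 2)⁻¹ + ((l + 1 : ℝ) ^ 2)⁻¹)
        - ((k + 1 : ℝ) ^ 2)⁻¹ * ((l + 1 : ℝ) ^ 2)⁻¹
        = (2 * (((k : ℝ) + 1) ^ 2 + ((l : ℝ) + 1) ^ 2) - ((n : ℝ) + 1) ^ 2)
          / (((n : ℝ) + 1) ^ 2 * ((k : ℝ) + 1) ^ 2 * ((l : ℝ) + 1) ^ 2) := by
      field_simp; ring
    rw [this]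
    exact div_nonneg (by linarith) (by positivity)
  have hsum : ∑ p ∈ antidiagonal n, (v p.1 + v p.2) ≤ 4 := by
    rw [sum_add_distrib, ← Nat.sum_antidiagonal_swap (f := fun p => v p.2)]
    simp only [Prod.snd_swap, Nat.sum_antidiagonal_eq_sum_range_succ_mk]
    linarith [sum_range_inv_sq_le (n + 1)]
  have hfactor :
      ∀ p ∈ antidiagonal n, weight R p.1 * weight R p.2 = R ^ n * (v p.1 * v p.2) := by
    rintro ⟨k, l⟩ hkl
    rw [HasAntidiagonal.mem_antidiagonal] at hkl
    simp only [weight, v, ← hkl, pow_add]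
    ring
  calc ∑ p ∈ antidiagonal n, weight R p.1 * weight R p.2
      = R ^ n * ∑ p ∈ antidiagonal n, v p.1 * v p.2 := by
        rw [sum_congr rfl hfactor, mul_sum]
    _ ≤ R ^ n * ∑ p ∈ antidiagonal n, 2 * v n * (v p.1 + v p.2) := by
        exact mul_le_mul_of_nonneg_left (sum_le_sum hpair) (pow_nonneg hR n)
    _ = 2 * (R ^ n * v n) * ∑ p ∈ antidiagonal n, (v p.1 + v p.2) := by
        rw [← mul_sum]; ring
    _ ≤ 2 * (R ^ n * v n) * 4 := by
        gcongr
    _ = 8 * weight R n := by simp only [weight, v, div_eq_mul_inv]; ring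

lemma weight_sub_le {R : ℝ} (hR : 0 < R) {n i : ℕ} (hi : i ≤ n) :
    weight R (n - i) ≤ 2 * (4 / R) ^ i * weight R n := by
  have h4 : ∀ i : ℕ, ((i : ℝ) + 1) ^ 2 ≤ 2 * 4 ^ i := by
    intro i
    induction i with
    | zero => norm_num
    | succ i ih => push_cast; rw [pow_succ (4 : ℝ)]; nlinarith [i.cast_nonneg (α := ℝ)]
  have hmul : ((n : ℝ) + 1) ≤ ((i : ℝ) + 1) * (((n - i : ℕ) : ℝ) + 1) := by
    have : (0 : ℝ) ≤ i * (n - i : ℕ) := by positivity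
    push_cast [hi] at this ⊢; nlinarith
  have hsq : ((n : ℝ) + 1) ^ 2 ≤ 2 * 4 ^ i * (((n - i : ℕ) : ℝ) + 1) ^ 2 := by
    calc ((n : ℝ) + 1) ^ 2 ≤ (((i : ℝ) + 1) * (((n - i : ℕ) : ℝ) + 1)) ^ 2 := by gcongr
      _ ≤ 2 * 4 ^ i * (((n - i : ℕ) : ℝ) + 1) ^ 2 := by rw [mul_pow]; gcongr; exact h4 i
  have hRn : R ^ n = R ^ (n - i) * R ^ i := by rw [← pow_add, Nat.sub_add_cancel hi]
  unfold weight
  rw [div_pow, hRn, div_le_iff₀ (by positivity)]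
  field_simp
  nlinarith [pow_pos hR (n - i), pow_pos hR i]

section Majorant

variable {A : Type*} [NormedRing A] {R : ℝ}

lemma norm_coeff_mul_le (hR : 0 ≤ R) {a b : A⟦X⟧} {α β : ℝ} {n : ℕ}
    (ha : ∀ m ≤ n, ‖coeff m a‖ ≤ α * weight R m)
    (hb : ∀ m ≤ n, ‖coeff m b‖ ≤ β * weight R m) :
    ‖coeff n (a * b)‖ ≤ 8 * α * β * weight R n := by
  have hα : 0 ≤ α := by simpa using (norm_nonneg _).trans (ha 0 (Nat.zero_le n))
  have hβ : 0 ≤ β := by simpa using (norm_nonneg _).trans (hb 0 (Nat.zero_le n))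
  have hterm : ∀ p ∈ antidiagonal n, ‖coeff p.1 a * coeff p.2 b‖
      ≤ α * β * (weight R p.1 * weight R p.2) := by
    rintro ⟨k, l⟩ hkl
    rw [HasAntidiagonal.mem_antidiagonal] at hkl
    calc ‖coeff k a * coeff l b‖ ≤ ‖coeff k a‖ * ‖coeff l b‖ := norm_mul_le _ _
      _ ≤ (α * weight R k) * (β * weight R l) :=
          mul_le_mul (ha k (by omega)) (hb l (by omega)) (norm_nonneg _)
            (mul_nonneg hα (weight_nonneg hR k))
      _ = α * β * (weight R k * weight R l) := by ring
  calc ‖coeff n (a * b)‖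
      ≤ ∑ p ∈ antidiagonal n, α * β * (weight R p.1 * weight R p.2) := by
        rw [coeff_mul]; exact (norm_sum_le _ _).trans (sum_le_sum hterm)
    _ ≤ α * β * (8 * weight R n) := by
        rw [← mul_sum]; gcongr; exact sum_antidiagonal_weight_mul_le hR n
    _ = 8 * α * β * weight R n := by ring

lemma norm_coeff_pow_le [NormOneClass A] (hR : 0 ≤ R) {y : A⟦X⟧} {ε : ℝ}
    (hy : ∀ m, ‖coeff m y‖ ≤ ε * weight R m) (j m : ℕ) :
    ‖coeff m (y ^ j)‖ ≤ (8 * ε) ^ j * weight R m := by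
  induction j generalizing m with
  | zero =>
    rw [pow_zero, pow_zero, one_mul, coeff_one]
    split_ifs with hm
    · simp [hm]
    · simpa using weight_nonneg hR m
  | succ j ih =>
    rw [pow_succ, pow_succ]
    have := norm_coeff_mul_le hR (fun k _ => ih k) (fun k _ => hy k) (n := m)
    linarith

end Majorant

lemma sum_range_pow_le_two {x : ℝ} (hx0 : 0 ≤ x) (hx : x ≤ 1 / 2) (N : ℕ) :
    ∑ i ∈ range N, x ^ i ≤ 2 := by
  have h := geom_sum_Ico_le_of_lt_one (m := 0) (n := N) hx0 (by linarith)
  rw [← range_eq_Ico, pow_zero] at h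
  exact h.trans (by rw [div_le_iff₀ (by linarith)]; linarith)

lemma sum_range_sum_range_le {T : ℕ → ℕ → ℝ} {C p q : ℝ} (hC : 0 ≤ C) (hp0 : 0 ≤ p)
    (hp : p ≤ 1 / 2) (hq0 : 0 ≤ q) (hq : q ≤ 1 / 2)
    (hT : ∀ i j, T i j ≤ C * (q ^ i * p ^ j)) (N : ℕ) :
    ∑ i ∈ range (N + 1), ∑ j ∈ range (N + 1), T i j ≤ T 0 0 + C * (4 * q + 2 * p) := by
  have hrow : ∑ j ∈ range N, T 0 (j + 1) ≤ C * (2 * p) := by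
    calc ∑ j ∈ range N, T 0 (j + 1) ≤ ∑ j ∈ range N, C * p * p ^ j :=
          sum_le_sum fun j _ => by simpa [pow_succ', mul_assoc] using hT 0 (j + 1)
      _ ≤ C * p * 2 := by
          rw [← mul_sum]; gcongr; exact sum_range_pow_le_two hp0 hp N
      _ = C * (2 * p) := by ring
  have hrest : ∑ i ∈ range N, ∑ j ∈ range (N + 1), T (i + 1) j ≤ C * (4 * q) := by
    calc ∑ i ∈ range N, ∑ j ∈ range (N + 1), T (i + 1) j
        ≤ ∑ i ∈ range N, ∑ j ∈ range (N + 1), C * q * q ^ i * p ^ j :=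
          sum_le_sum fun i _ => sum_le_sum fun j _ => by
            simpa [pow_succ, mul_comm, mul_left_comm, mul_assoc] using hT (i + 1) j
      _ = C * q * ((∑ i ∈ range N, q ^ i) * ∑ j ∈ range (N + 1), p ^ j) := by
          rw [sum_mul_sum, mul_sum]
          exact sum_congr rfl fun i _ => by rw [mul_sum]; exact sum_congr rfl fun j _ => by ring
      _ ≤ C * q * (2 * 2) := by
          gcongr
          · exact sum_range_pow_le_two hq0 hq N
          · exact sum_range_pow_le_two hp0 hp (N + 1)
      _ = C * (4 * q) := by ring
  rw [sum_range_succ', sum_range_succ' _ N]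
  linarith

variable {s M ε R : ℝ}

lemma norm_fcoeff_mul_coeff_le {h : MvPowerSeries (Fin 2) ℂ} {y : ℂ⟦X⟧} (hs : 0 < s)
    (hR : 0 < R) (hh : ∀ i j, ‖fcoeff h i j‖ ≤ M / s ^ (i + j))
    (hy : ∀ m, ‖coeff m y‖ ≤ ε * weight R m) (i j m : ℕ) :
    ‖fcoeff h i j * coeff m (X ^ i * y ^ j)‖
      ≤ 2 * M * weight R m * ((4 / (s * R)) ^ i * (8 * ε / s) ^ j) := by
  have hM : 0 ≤ M := by simpa using (norm_nonneg _).trans (hh 0 0)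
  have hε : 0 ≤ ε := by simpa using (norm_nonneg _).trans (hy 0)
  rw [coeff_X_pow_mul']
  split_ifs with hi
  · calc ‖fcoeff h i j * coeff (m - i) (y ^ j)‖
        ≤ M / s ^ (i + j) * ((8 * ε) ^ j * (2 * (4 / R) ^ i * weight R m)) := by
          rw [norm_mul]
          gcongr
          · exact hh i j
          · exact (norm_coeff_pow_le hR.le hy j (m - i)).trans
              (by gcongr; exact weight_sub_le hR hi)
      _ = 2 * M * weight R m * ((4 / (s * R)) ^ i * (8 * ε / s) ^ j) := by
          rw [div_pow, div_pow, mul_pow, mul_pow, div_pow, pow_add]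
          field_simp
          ring
  · rw [mul_zero, norm_zero]
    have := weight_nonneg hR.le m
    positivity

lemma norm_coeff_subst2_le {h : MvPowerSeries (Fin 2) ℂ} {y : ℂ⟦X⟧} (hs : 0 < s)
    (hR : 0 < R) (hh : ∀ i j, ‖fcoeff h i j‖ ≤ M / s ^ (i + j))
    (hy : ∀ m, ‖coeff m y‖ ≤ ε * weight R m) (hp : 8 * ε / s ≤ 1 / 2)
    (hq : 4 / (s * R) ≤ 1 / 2) {m : ℕ} (hm : 0 < m) :
    ‖coeff m (subst2 h y)‖ ≤ 2 * M * (4 * (4 / (s * R)) + 2 * (8 * ε / s)) * weight R m := by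
  have hM : 0 ≤ M := by simpa using (norm_nonneg _).trans (hh 0 0)
  have hε : 0 ≤ ε := by simpa using (norm_nonneg _).trans (hy 0)
  obtain ⟨m, rfl⟩ : ∃ k, m = k + 1 := ⟨m - 1, by omega⟩
  rw [subst2, coeff_mk]
  refine (norm_sum_le _ _).trans <| (sum_le_sum fun i _ => norm_sum_le _ _).trans ?_
  have h00 : ‖fcoeff h 0 0 * coeff (m + 1) (X ^ 0 * y ^ 0)‖ = 0 := by simp
  have := sum_range_sum_range_le (mul_nonneg (mul_nonneg zero_le_two hM) (weight_nonneg hR.le _))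
    (by positivity) hp (by positivity) hq (norm_fcoeff_mul_coeff_le hs hR hh hy · · (m + 1))
    (m + 1)
  rw [h00] at this
  linarith

section Linearization

variable {K : Type*} [CommRing K]

lemma X_pow_succ_dvd_pow_sub_pow {a b : K⟦X⟧} {n j : ℕ} (ha : constantCoeff a = 0)
    (hb : constantCoeff b = 0) (hab : X ^ n ∣ a - b) (hj : 2 ≤ j) :
    X ^ (n + 1) ∣ a ^ j - b ^ j := by
  obtain ⟨k, rfl⟩ : ∃ k, j = k + 1 + 1 := ⟨j - 2, by omega⟩
  have hsplit : a ^ (k + 1 + 1) - b ^ (k + 1 + 1)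
      = a ^ (k + 1) * (a - b) + (a ^ (k + 1) - b ^ (k + 1)) * b := by ring
  rw [hsplit, pow_succ']
  refine dvd_add ?_ ?_
  · exact mul_dvd_mul (dvd_pow (X_dvd_iff.mpr ha) (Nat.succ_ne_zero k)) hab
  · rw [mul_comm (X : K⟦X⟧)]
    exact mul_dvd_mul (hab.trans (sub_dvd_pow_sub_pow a b _)) (X_dvd_iff.mpr hb)

lemma coeff_X_pow_mul_pow_sub_pow {a b : K⟦X⟧} {n : ℕ} (ha : constantCoeff a = 0)
    (hb : constantCoeff b = 0) (hab : X ^ n ∣ a - b) (i j : ℕ) :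
    coeff n (X ^ i * (a ^ j - b ^ j)) = if i = 0 ∧ j = 1 then coeff n (a - b) else 0 := by
  split_ifs with hij
  · simp [hij]
  rcases Nat.eq_zero_or_pos j with rfl | hj
  · simp
  have hdvd : X ^ (n + 1) ∣ X ^ i * (a ^ j - b ^ j) := by
    rcases Nat.eq_zero_or_pos i with rfl | hi
    · rw [pow_zero, one_mul]
      exact X_pow_succ_dvd_pow_sub_pow ha hb hab (by omega)
    · rw [pow_succ']
      exact mul_dvd_mul (dvd_pow_self X hi.ne') (hab.trans (sub_dvd_pow_sub_pow a b j))
  exact X_pow_dvd_iff.mp hdvd n (Nat.lt_succ_self n)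

lemma coeff_X_mul_derivative (z : K⟦X⟧) (n : ℕ) :
    coeff n (X * d⁄dX K z) = n * coeff n z := by
  cases n with
  | zero => simp
  | succ n => rw [coeff_succ_X_mul, coeff_derivative]; push_cast; ring

lemma coeff_mul_of_X_pow_dvd (a : K⟦X⟧) {e : K⟦X⟧} {n : ℕ} (he : X ^ n ∣ e) :
    coeff n (a * e) = constantCoeff a * coeff n e := by
  obtain ⟨e, rfl⟩ := he
  simp only [mul_left_comm a, coeff_X_pow_mul', le_refl, if_true, Nat.sub_self,
    coeff_zero_eq_constantCoeff, map_mul]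

end Linearization

lemma coeff_zero_subst2 (h : MvPowerSeries (Fin 2) ℂ) (z : ℂ⟦X⟧) :
    coeff 0 (subst2 h z) = fcoeff h 0 0 := by
  simp [subst2]

lemma X_pow_dvd_subst2_sub_subst2 (h : MvPowerSeries (Fin 2) ℂ) {a b : ℂ⟦X⟧} {n : ℕ}
    (hab : X ^ n ∣ a - b) : X ^ n ∣ subst2 h a - subst2 h b := by
  refine X_pow_dvd_iff.mpr fun m hm => ?_
  simp only [subst2, map_sub, coeff_mk, ← sum_sub_distrib, ← mul_sub]
  refine sum_eq_zero fun i _ => sum_eq_zero fun j _ => ?_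
  have hdvd : X ^ n ∣ X ^ i * (a ^ j - b ^ j) :=
    dvd_mul_of_dvd_right (hab.trans (sub_dvd_pow_sub_pow a b j)) _
  rw [← map_sub, ← mul_sub, X_pow_dvd_iff.mp hdvd m hm, mul_zero]

lemma coeff_subst2_sub_subst2 (h : MvPowerSeries (Fin 2) ℂ) {a b : ℂ⟦X⟧} {n : ℕ}
    (ha : constantCoeff a = 0) (hb : constantCoeff b = 0) (hab : X ^ n ∣ a - b) (hn : 0 < n) :
    coeff n (subst2 h a) - coeff n (subst2 h b) = fcoeff h 0 1 * coeff n (a - b) := by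
  simp only [subst2, coeff_mk, ← sum_sub_distrib, ← mul_sub, ← map_sub,
    coeff_X_pow_mul_pow_sub_pow ha hb hab, mul_ite, mul_zero]
  rw [sum_eq_single 0 (fun i _ hi => by simp [hi]) (by simp), sum_eq_single 1 (by simp_all)
    (by simp; omega)]
  simp

noncomputable def residual (f g : MvPowerSeries (Fin 2) ℂ) (z : ℂ⟦X⟧) : ℂ⟦X⟧ :=
  subst2 g z * (X * d⁄dX ℂ z) - subst2 f z

lemma coeff_residual_sub_residual (f g : MvPowerSeries (Fin 2) ℂ) {a b : ℂ⟦X⟧} {n : ℕ}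
    (ha : constantCoeff a = 0) (hb : constantCoeff b = 0) (hab : X ^ n ∣ a - b) (hn : 0 < n) :
    coeff n (residual f g a) - coeff n (residual f g b)
      = (n * fcoeff g 0 0 - fcoeff f 0 1) * coeff n (a - b) := by
  have hD : X ^ n ∣ X * d⁄dX ℂ a - X * d⁄dX ℂ b := by
    refine X_pow_dvd_iff.mpr fun m hm => ?_
    rw [map_sub, coeff_X_mul_derivative, coeff_X_mul_derivative, ← mul_sub, ← map_sub,
      X_pow_dvd_iff.mp hab m hm, mul_zero]
  have hG : X ^ (n + 1) ∣ (subst2 g a - subst2 g b) * (X * d⁄dX ℂ b) := by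
    rw [pow_succ]
    exact mul_dvd_mul (X_pow_dvd_subst2_sub_subst2 g hab) (dvd_mul_right X _)
  have hsplit : residual f g a - residual f g b
      = subst2 g a * (X * d⁄dX ℂ a - X * d⁄dX ℂ b)
        + (subst2 g a - subst2 g b) * (X * d⁄dX ℂ b) - (subst2 f a - subst2 f b) := by
    unfold residual; ring
  rw [← map_sub, hsplit, map_sub, map_add, coeff_mul_of_X_pow_dvd _ hD,
    X_pow_dvd_iff.mp hG n (Nat.lt_succ_self n), map_sub (coeff n) (subst2 f a),
    coeff_subst2_sub_subst2 f ha hb hab hn, ← coeff_zero_eq_constantCoeff_apply,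
    coeff_zero_subst2, map_sub, coeff_X_mul_derivative, coeff_X_mul_derivative, map_sub]
  ring

lemma norm_coeff_residual_le {f g : MvPowerSeries (Fin 2) ℂ} {y : ℂ⟦X⟧} (hs : 0 < s)
    (hR : 0 < R) (hfM : ∀ i j, ‖fcoeff f i j‖ ≤ M / s ^ (i + j))
    (hgM : ∀ i j, ‖fcoeff g i j‖ ≤ M / s ^ (i + j))
    (hy : ∀ m, ‖coeff m y‖ ≤ ε * weight R m) (hp : 8 * ε / s ≤ 1 / 2)
    (hq : 4 / (s * R) ≤ 1 / 2) {n : ℕ} (hn : 0 < n) (hyn : coeff n y = 0) :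
    ‖coeff n (residual f g y)‖
      ≤ 2 * M * (4 * (4 / (s * R)) + 2 * (8 * ε / s)) * (1 + 8 * n * ε) * weight R n := by
  set K := 2 * M * (4 * (4 / (s * R)) + 2 * (8 * ε / s))
  have hM : 0 ≤ M := by simpa using (norm_nonneg _).trans (hgM 0 0)
  have hε : 0 ≤ ε := by simpa using (norm_nonneg _).trans (hy 0)
  have hG : ∀ m ≤ n, ‖coeff m (subst2 g y - C (fcoeff g 0 0))‖ ≤ K * weight R m := by
    intro m _
    rcases Nat.eq_zero_or_pos m with rfl | hm
    · simp only [map_sub, coeff_zero_subst2, coeff_zero_C, sub_self, norm_zero, weight_zero]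
      positivity
    · rw [map_sub, coeff_C, if_neg hm.ne', sub_zero]
      exact norm_coeff_subst2_le hs hR hgM hy hp hq hm
  have hD : ∀ m ≤ n, ‖coeff m (X * d⁄dX ℂ y)‖ ≤ n * ε * weight R m := by
    intro m hm
    rw [coeff_X_mul_derivative, norm_mul, Complex.norm_natCast, mul_assoc]
    exact mul_le_mul (by exact_mod_cast hm) (hy m) (norm_nonneg _) (Nat.cast_nonneg n)
  have hsplit : residual f g y = (subst2 g y - C (fcoeff g 0 0)) * (X * d⁄dX ℂ y)
      + C (fcoeff g 0 0) * (X * d⁄dX ℂ y) - subst2 f y := by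
    unfold residual; ring
  have hlin : coeff n (C (fcoeff g 0 0) * (X * d⁄dX ℂ y)) = 0 := by
    rw [coeff_C_mul, coeff_X_mul_derivative, hyn, mul_zero, mul_zero]
  calc ‖coeff n (residual f g y)‖
      ≤ ‖coeff n ((subst2 g y - C (fcoeff g 0 0)) * (X * d⁄dX ℂ y))‖
        + ‖coeff n (subst2 f y)‖ := by
        rw [hsplit, map_sub, map_add, hlin, add_zero]; exact norm_sub_le _ _
    _ ≤ 8 * K * (n * ε) * weight R n + K * weight R n :=
        add_le_add (norm_coeff_mul_le hR.le hG hD) (norm_coeff_subst2_le hs hR hfM hy hp hq hn)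
    _ = K * (1 + 8 * n * ε) * weight R n := by ring

lemma norm_coeff_le_of_residual_eq_zero {f g : MvPowerSeries (Fin 2) ℂ} {z : ℂ⟦X⟧} {c : ℝ}
    {N : ℕ} (hs : 0 < s) (hR : 0 < R) (hfM : ∀ i j, ‖fcoeff f i j‖ ≤ M / s ^ (i + j))
    (hgM : ∀ i j, ‖fcoeff g i j‖ ≤ M / s ^ (i + j)) (hp : 8 * ε / s ≤ 1 / 2)
    (hq : 4 / (s * R) ≤ 1 / 2) (hc : 0 < c)
    (hK : 2 * M * (4 * (4 / (s * R)) + 2 * (8 * ε / s)) ≤ c / 32)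
    (hN : ∀ n, N ≤ n → 0 < n ∧ n * c / 2 ≤ ‖n * fcoeff g 0 0 - fcoeff f 0 1‖ ∧
      2 * M * (4 * (4 / (s * R)) + 2 * (8 * ε / s)) ≤ n * c * ε / 4)
    (hinit : ∀ n < N, ‖coeff n z‖ ≤ ε * weight R n) (hz0 : constantCoeff z = 0)
    (hz : residual f g z = 0) (n : ℕ) :
    ‖coeff n z‖ ≤ ε * weight R n := by
  induction n using Nat.strong_induction_on with
  | _ n ih =>
  rcases lt_or_ge n N with hnN | hnN
  · exact hinit n hnN
  obtain ⟨hn, hd, hKn⟩ := hN n hnN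
  have hε : 0 ≤ ε := by simpa using (norm_nonneg _).trans (ih 0 hn)
  set y : ℂ⟦X⟧ := (trunc n z : ℂ⟦X⟧)
  have hyz : ∀ m, coeff m y = if m < n then coeff m z else 0 := fun m => by
    simp only [y, Polynomial.coeff_coe, coeff_trunc]
  have hyn : coeff n y = 0 := by rw [hyz, if_neg (lt_irrefl n)]
  have hy : ∀ m, ‖coeff m y‖ ≤ ε * weight R m := fun m => by
    rw [hyz]
    split_ifs with hm
    · exact ih m hm
    · simpa using mul_nonneg hε (weight_nonneg hR.le m)
  have hy0 : constantCoeff y = 0 := by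
    rw [← coeff_zero_eq_constantCoeff_apply, hyz, if_pos hn, coeff_zero_eq_constantCoeff_apply,
      hz0]
  have hzy : X ^ n ∣ z - y := ⟨_, sub_eq_iff_eq_add.mpr (eq_X_pow_mul_shift_add_trunc n z)⟩
  have hlin := coeff_residual_sub_residual f g hz0 hy0 hzy hn
  rw [hz, map_zero, zero_sub, map_sub, hyn, sub_zero] at hlin
  have hKε :
      2 * M * (4 * (4 / (s * R)) + 2 * (8 * ε / s)) * (1 + 8 * n * ε) ≤ n * c / 2 * ε := by
    nlinarith [mul_le_mul_of_nonneg_left hK (by positivity : (0 : ℝ) ≤ 8 * n * ε)]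
  refine le_of_mul_le_mul_left ?_ (by positivity : (0 : ℝ) < n * c / 2)
  calc n * c / 2 * ‖coeff n z‖
      ≤ ‖n * fcoeff g 0 0 - fcoeff f 0 1‖ * ‖coeff n z‖ := by gcongr
    _ = ‖coeff n (residual f g y)‖ := by rw [← norm_mul, ← hlin, norm_neg]
    _ ≤ 2 * M * (4 * (4 / (s * R)) + 2 * (8 * ε / s)) * (1 + 8 * n * ε) * weight R n :=
        norm_coeff_residual_le hs hR hfM hgM hy hp hq hn hyn
    _ ≤ n * c / 2 * (ε * weight R n) := by
        rw [← mul_assoc]; exact mul_le_mul_of_nonneg_right hKε (weight_nonneg hR.le n)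

lemma norm_fcoeff_le_of_summable {h : MvPowerSeries (Fin 2) ℂ} {r : ℝ} (hr : 0 < r)
    (hsum : Summable fun p : ℕ × ℕ => ‖fcoeff h p.1 p.2‖ * r ^ (p.1 + p.2)) (i j : ℕ) :
    ‖fcoeff h i j‖
      ≤ (∑' p : ℕ × ℕ, ‖fcoeff h p.1 p.2‖ * r ^ (p.1 + p.2)) / r ^ (i + j) := by
  rw [le_div_iff₀ (by positivity)]
  exact hsum.le_tsum (i, j) fun _ _ => by positivity

lemma exists_norm_fcoeff_le {f g : MvPowerSeries (Fin 2) ℂ}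
    (hconv : ∃ r : ℝ, 0 < r ∧
      Summable (fun p : ℕ × ℕ => ‖fcoeff f p.1 p.2‖ * r ^ (p.1 + p.2)) ∧
      Summable (fun p : ℕ × ℕ => ‖fcoeff g p.1 p.2‖ * r ^ (p.1 + p.2))) :
    ∃ s M : ℝ, 0 < s ∧ (∀ i j, ‖fcoeff f i j‖ ≤ M / s ^ (i + j)) ∧
      ∀ i j, ‖fcoeff g i j‖ ≤ M / s ^ (i + j) := by
  obtain ⟨s, hs, hfsum, hgsum⟩ := hconv
  refine ⟨s, max (∑' p : ℕ × ℕ, ‖fcoeff f p.1 p.2‖ * s ^ (p.1 + p.2))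
    (∑' p : ℕ × ℕ, ‖fcoeff g p.1 p.2‖ * s ^ (p.1 + p.2)), hs,
    fun i j => ?_, fun i j => ?_⟩
  · exact (norm_fcoeff_le_of_summable hs hfsum i j).trans (by gcongr; exact le_max_left _ _)
  · exact (norm_fcoeff_le_of_summable hs hgsum i j).trans (by gcongr; exact le_max_right _ _)

lemma eventually_mul_norm_le_norm_sub (a b : ℂ) :
    ∀ᶠ n : ℕ in atTop, n * ‖a‖ / 2 ≤ ‖n * a - b‖ := by
  rcases eq_or_ne a 0 with rfl | ha
  · simp
  filter_upwards [(tendsto_natCast_atTop_atTop.atTop_mul_const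
    (by positivity : 0 < ‖a‖ / 2)).eventually_ge_atTop ‖b‖] with n hn
  have := norm_sub_norm_le ((n : ℂ) * a) b
  rw [norm_mul, Complex.norm_natCast] at this
  linarith

lemma eventually_norm_coeff_le_weight {z : ℂ⟦X⟧} (hz0 : constantCoeff z = 0) {ε : ℝ}
    (hε : 0 < ε) (n : ℕ) : ∀ᶠ R in atTop, ‖coeff n z‖ ≤ ε * weight R n := by
  rcases Nat.eq_zero_or_pos n with rfl | hn
  · simp [coeff_zero_eq_constantCoeff_apply, hz0, hε.le]
  exact ((((tendsto_pow_atTop hn.ne').atTop_div_const (by positivity)).const_mul_atTop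
    hε).eventually_ge_atTop _)

lemma exists_summable_of_norm_coeff_le {A : Type*} [NormedRing A] {z : A⟦X⟧} {C R : ℝ}
    (hR : 0 < R) (hz : ∀ n, ‖coeff n z‖ ≤ C * weight R n) :
    ∃ r : ℝ, 0 < r ∧ Summable fun n => ‖coeff n z‖ * r ^ n := by
  have hC : 0 ≤ C := by simpa using (norm_nonneg _).trans (hz 0)
  refine ⟨1 / (2 * R), by positivity, .of_nonneg_of_le (fun n => by positivity) (fun n => ?_)
    (summable_geometric_two.mul_left C)⟩
  have hw : weight R n * (1 / (2 * R)) ^ n = (1 / 2) ^ n / ((n : ℝ) + 1) ^ 2 := by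
    rw [weight, div_mul_eq_mul_div, ← mul_pow]
    field_simp
  calc ‖coeff n z‖ * (1 / (2 * R)) ^ n ≤ C * weight R n * (1 / (2 * R)) ^ n := by
        gcongr; exact hz n
    _ = C * ((1 / 2) ^ n / ((n : ℝ) + 1) ^ 2) := by rw [mul_assoc, hw]
    _ ≤ C * (1 / 2) ^ n := by
        gcongr
        exact div_le_self (by positivity) (one_le_pow₀ (by linarith [n.cast_nonneg (α := ℝ)]))

end BriotBouquet

open BriotBouquet in
theorem briot_bouquet_convergence_general
    (f g : MvPowerSeries (Fin 2) ℂ)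
    (hg : fcoeff g 0 0 ≠ 0)
    (hconv : ∃ r : ℝ, 0 < r ∧
      Summable (fun p : ℕ × ℕ => ‖fcoeff f p.1 p.2‖ * r ^ (p.1 + p.2)) ∧
      Summable (fun p : ℕ × ℕ => ‖fcoeff g p.1 p.2‖ * r ^ (p.1 + p.2))) :
    ∀ z : PowerSeries ℂ, PowerSeries.constantCoeff z = 0 →
      subst2 g z * (PowerSeries.X * z.derivativeFun) = subst2 f z →
      ∃ r : ℝ, 0 < r ∧ Summable fun n : ℕ => ‖PowerSeries.coeff n z‖ * r ^ n := by
  intro z hz0 hsol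
  obtain ⟨s, M, hs, hfM, hgM⟩ := exists_norm_fcoeff_le hconv
  set c := ‖fcoeff g 0 0‖
  have hc : 0 < c := norm_pos_iff.mpr hg
  have hcM : c ≤ M := by simpa using hgM 0 0
  obtain ⟨ε, hε, hp, hpc⟩ :
      ∃ ε : ℝ, 0 < ε ∧ 8 * ε / s ≤ 1 / 2 ∧ 4 * M * (8 * ε / s) ≤ c / 64 := by
    have hM : 0 < M := hc.trans_le hcM
    refine ⟨c * s / (2048 * M), by positivity, ?_, le_of_eq ?_⟩
    · field_simp; linarith
    · field_simp; ring
  obtain ⟨N, hN⟩ := eventually_atTop.mp ((eventually_gt_atTop 0).and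
    ((eventually_mul_norm_le_norm_sub (fcoeff g 0 0) (fcoeff f 0 1)).and
    ((tendsto_natCast_atTop_atTop.atTop_mul_const (by positivity : 0 < c * ε / 4)
      ).eventually_ge_atTop (4 * M * (8 * ε / s) + c * ε / 8))))
  have hq0 : Tendsto (fun R : ℝ => 4 / (s * R)) atTop (𝓝 0) :=
    tendsto_const_nhds.div_atTop (tendsto_id.const_mul_atTop hs)
  have hqM : Tendsto (fun R : ℝ => 8 * M * (4 / (s * R))) atTop (𝓝 0) := by
    simpa using hq0.const_mul (8 * M)
  obtain ⟨R, hR, hq, hqc, hqε, hinit⟩ := ((eventually_gt_atTop 0).and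
    ((hq0.eventually_le_const (by norm_num : (0 : ℝ) < 1 / 2)).and
    ((hqM.eventually_le_const (by positivity : 0 < c / 64)).and
    ((hqM.eventually_le_const (by positivity : 0 < c * ε / 8)).and
    ((eventually_all_finset (range N)).mpr
      fun n _ => eventually_norm_coeff_le_weight hz0 hε n))))).exists
  refine exists_summable_of_norm_coeff_le hR (norm_coeff_le_of_residual_eq_zero hs hR hfM hgM hp
    hq hc (by linarith) (fun n hn => ?_) (fun n hn => hinit n (mem_range.mpr hn)) hz0
    (sub_eq_zero.mpr hsol))
  obtain ⟨hn, hd, hnε⟩ := hN n hn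
  exact ⟨hn, by simpa [mul_div_right_comm] using hd, by linarith⟩

/-- Briot–Bouquet, convergence: if `f` and `g` are convergent two-variable power
series with `g(0,0) ≠ 0` and `f(0,0) = 0`, then every formal power series solution
`z` with zero constant term of `g(t, z(t)) · t · z'(t) = f(t, z(t))` is convergent. -/
theorem briot_bouquet_convergence
    (f g : MvPowerSeries (Fin 2) ℂ)
    (hg : fcoeff g 0 0 ≠ 0) (hf : fcoeff f 0 0 = 0)
    (hconv : ∃ r : ℝ, 0 < r ∧
      Summable (fun p : ℕ × ℕ => ‖fcoeff f p.1 p.2‖ * r ^ (p.1 + p.2)) ∧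
      Summable (fun p : ℕ × ℕ => ‖fcoeff g p.1 p.2‖ * r ^ (p.1 + p.2))) :
    ∀ z : PowerSeries ℂ, PowerSeries.constantCoeff z = 0 →
      subst2 g z * (PowerSeries.X * z.derivativeFun) = subst2 f z →
      ∃ r : ℝ, 0 < r ∧ Summable fun n : ℕ => ‖PowerSeries.coeff n z‖ * r ^ n :=
  briot_bouquet_convergence_general f g hg hconv
end

section
/- Let ν ≥ 1 be an integer and let A, B ∈ ℂ[[u]] be formal power series with ord(A) = ν − 1 and B(0) ≠ 0. Then the set of formal power series s ∈ ℂ[[t]] with ord(s) = 1 satisfying A(s(t))·s'(t) = t^{ν−1}·B(s(t)) has exactly ν elements, and every such s satisfies (coeff_1(s))^ν = B(0)/coeff_{ν−1}(A). -/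
/-!
Write `d = ν - 1`, `a = coeff d A`, `b = B(0)` and `s = c t + ⋯`. The coefficient of `t^d` in
`A(s) s' - t^d B(s)` is `a c^ν - b`, so `c` is a `ν`-th root of `b / a`. For `n ≥ 1` the
coefficient of `t^(n+d)` depends only on the coefficients of `s` up to `t^(n+1)`, and on the last
one affinely with slope `a c^d (n + ν) ≠ 0`, because `u^k - v^k = (u - v) ∑ u^i v^(k-1-i)`.
Hence each of the `ν` roots `c` is the linear coefficient of exactly one solution, which is built
coefficient by coefficient.
-/

/-- Composition `A(s(t))` of formal power series (intended for `s` with zero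
constant term, in which case `coeff n (s^k) = 0` for `k > n`). -/
noncomputable def pscomp (A s : PowerSeries ℂ) : PowerSeries ℂ :=
  PowerSeries.mk fun n => ∑ k ∈ Finset.range (n + 1),
    (PowerSeries.coeff k A) * PowerSeries.coeff n (s ^ k)

open PowerSeries Finset

namespace PowerSeries

variable {R : Type*} [CommRing R]

theorem order_eq_one_iff {s : R⟦X⟧} : s.order = 1 ↔ X ∣ s ∧ coeff 1 s ≠ 0 := by
  rw [← Nat.cast_one, order_eq_nat, X_dvd_iff, ← coeff_zero_eq_constantCoeff_apply]
  exact ⟨fun ⟨h1, h0⟩ => ⟨h0 0 one_pos, h1⟩, fun ⟨h0, h1⟩ => ⟨h1, by simpa using h0⟩⟩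

theorem coeff_add_mul_of_X_pow_dvd {f g : R⟦X⟧} {a b : ℕ} (hf : X ^ a ∣ f) (hg : X ^ b ∣ g) :
    coeff (a + b) (f * g) = coeff a f * coeff b g := by
  obtain ⟨f, rfl⟩ := hf
  obtain ⟨g, rfl⟩ := hg
  rw [mul_mul_mul_comm, ← pow_add]
  simp [coeff_X_pow_mul']

theorem coeff_pow_self {s : R⟦X⟧} (hs : X ∣ s) (k : ℕ) : coeff k (s ^ k) = coeff 1 s ^ k := by
  induction k with
  | zero => simp
  | succ k ih =>
    rw [pow_succ, coeff_add_mul_of_X_pow_dvd (pow_dvd_pow_of_dvd hs k) (by rwa [pow_one]), ih,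
      pow_succ]

theorem X_pow_dvd_derivative {f : R⟦X⟧} {n : ℕ} (hf : X ^ (n + 1) ∣ f) : X ^ n ∣ d⁄dX R f :=
  X_pow_dvd_iff.mpr fun m hm => by
    rw [coeff_derivative, X_pow_dvd_iff.mp hf (m + 1) (by omega), zero_mul]

variable {s t : R⟦X⟧} {n : ℕ}

theorem coeff_eq_of_X_pow_dvd_sub (h : X ^ n ∣ s - t) {m : ℕ} (hm : m < n) :
    coeff m s = coeff m t :=
  sub_eq_zero.mp (by simpa using X_pow_dvd_iff.mp h m hm)

theorem X_pow_dvd_pow_mul_pow (hs : X ∣ s) (ht : X ∣ t) {i k : ℕ} (hi : i ≤ k) :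
    X ^ k ∣ s ^ i * t ^ (k - i) := by
  rw [← Nat.add_sub_cancel' hi, pow_add, Nat.add_sub_cancel_left]
  exact mul_dvd_mul (pow_dvd_pow_of_dvd hs i) (pow_dvd_pow_of_dvd ht _)

theorem X_pow_dvd_geom_sum₂ (hs : X ∣ s) (ht : X ∣ t) (k : ℕ) :
    X ^ k ∣ ∑ i ∈ range (k + 1), s ^ i * t ^ (k + 1 - 1 - i) :=
  dvd_sum fun i hi => by
    rw [Nat.add_sub_cancel]
    exact X_pow_dvd_pow_mul_pow hs ht (Nat.lt_succ_iff.mp (mem_range.mp hi))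

theorem X_pow_dvd_pow_sub_pow (hs : X ∣ s) (ht : X ∣ t) (hst : X ^ (n + 1) ∣ s - t) (k : ℕ) :
    X ^ (n + k) ∣ s ^ k - t ^ k := by
  rcases k with _ | k
  · simp
  rw [← geom_sum₂_mul, show n + (k + 1) = k + (n + 1) by omega, pow_add]
  exact mul_dvd_mul (X_pow_dvd_geom_sum₂ hs ht k) hst

theorem coeff_pow_sub_pow (hs : X ∣ s) (ht : X ∣ t) (hn : n ≠ 0) (hst : X ^ (n + 1) ∣ s - t)
    (k : ℕ) :
    coeff (n + k) (s ^ k - t ^ k) = k * coeff 1 s ^ (k - 1) * coeff (n + 1) (s - t) := by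
  rcases k with _ | k
  · simp
  have hc : coeff 1 t = coeff 1 s := (coeff_eq_of_X_pow_dvd_sub hst (by omega)).symm
  rw [← geom_sum₂_mul, show n + (k + 1) = k + (n + 1) by omega,
    coeff_add_mul_of_X_pow_dvd (X_pow_dvd_geom_sum₂ hs ht k) hst, map_sum, ← geom_sum₂_self]
  congr 1
  refine sum_congr rfl fun i hi => ?_
  have hik := Nat.lt_succ_iff.mp (mem_range.mp hi)
  have h := coeff_add_mul_of_X_pow_dvd (pow_dvd_pow_of_dvd hs i) (pow_dvd_pow_of_dvd ht (k - i))
  rw [Nat.add_sub_cancel' hik] at h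
  rw [Nat.add_sub_cancel, h, coeff_pow_self hs, coeff_pow_self ht, hc]

end PowerSeries

theorem coeff_pscomp (F s : ℂ⟦X⟧) (m : ℕ) :
    coeff m (pscomp F s) = ∑ k ∈ range (m + 1), coeff k F * coeff m (s ^ k) :=
  coeff_mk _ _

theorem coeff_pscomp_sub_pscomp (F s t : ℂ⟦X⟧) (m : ℕ) :
    coeff m (pscomp F s - pscomp F t) =
      ∑ k ∈ range (m + 1), coeff k F * coeff m (s ^ k - t ^ k) := by
  simp only [map_sub, coeff_pscomp, ← sum_sub_distrib, mul_sub]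

section pscomp

variable {F s t : ℂ⟦X⟧} {d n : ℕ}

theorem X_pow_dvd_pscomp (hF : X ^ d ∣ F) : X ^ d ∣ pscomp F s :=
  X_pow_dvd_iff.mpr fun m hm => by
    rw [coeff_pscomp]
    exact sum_eq_zero fun k hk => by
      rw [X_pow_dvd_iff.mp hF k (by simp at hk; omega), zero_mul]

theorem coeff_pscomp_of_X_pow_dvd (hF : X ^ d ∣ F) (hs : X ∣ s) :
    coeff d (pscomp F s) = coeff d F * coeff 1 s ^ d := by
  rw [coeff_pscomp, sum_eq_single_of_mem d (self_mem_range_succ d), coeff_pow_self hs]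
  intro k hk hkd
  rw [X_pow_dvd_iff.mp hF k (by simp at hk; omega), zero_mul]

theorem X_pow_dvd_pscomp_sub_pscomp (hF : X ^ d ∣ F) (hs : X ∣ s) (ht : X ∣ t)
    (hst : X ^ (n + 1) ∣ s - t) : X ^ (n + d) ∣ pscomp F s - pscomp F t :=
  X_pow_dvd_iff.mpr fun m hm => by
    rw [coeff_pscomp_sub_pscomp]
    refine sum_eq_zero fun k _ => ?_
    rcases lt_or_ge k d with hkd | hkd
    · rw [X_pow_dvd_iff.mp hF k hkd, zero_mul]
    · rw [X_pow_dvd_iff.mp (X_pow_dvd_pow_sub_pow hs ht hst k) m (by omega), mul_zero]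

theorem coeff_add_pscomp_sub_pscomp (hF : X ^ d ∣ F) (hs : X ∣ s) (ht : X ∣ t) (hn : n ≠ 0)
    (hst : X ^ (n + 1) ∣ s - t) :
    coeff (n + d) (pscomp F s - pscomp F t) =
      coeff d F * (d * coeff 1 s ^ (d - 1) * coeff (n + 1) (s - t)) := by
  rw [coeff_pscomp_sub_pscomp, sum_eq_single_of_mem d (by simp),
    coeff_pow_sub_pow hs ht hn hst]
  intro k _ hkd
  rcases lt_or_gt_of_ne hkd with hkd | hkd
  · rw [X_pow_dvd_iff.mp hF k hkd, zero_mul]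
  · rw [X_pow_dvd_iff.mp (X_pow_dvd_pow_sub_pow hs ht hst k) _ (by omega), mul_zero]

end pscomp

noncomputable def assocDefect (d : ℕ) (A B s : ℂ⟦X⟧) : ℂ⟦X⟧ :=
  pscomp A s * d⁄dX ℂ s - X ^ d * pscomp B s

section assocDefect

variable {d n : ℕ} {A B s t : ℂ⟦X⟧}

theorem X_pow_dvd_assocDefect (hA : X ^ d ∣ A) : X ^ d ∣ assocDefect d A B s :=
  dvd_sub (dvd_mul_of_dvd_left (X_pow_dvd_pscomp hA) _) (dvd_mul_right _ _)

theorem coeff_assocDefect (hA : X ^ d ∣ A) (hs : X ∣ s) :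
    coeff d (assocDefect d A B s) = coeff d A * coeff 1 s ^ (d + 1) - constantCoeff B := by
  have hA' := coeff_add_mul_of_X_pow_dvd (X_pow_dvd_pscomp (s := s) hA)
    (pow_zero (X : ℂ⟦X⟧) ▸ one_dvd (d⁄dX ℂ s))
  rw [add_zero] at hA'
  rw [assocDefect, map_sub, hA', coeff_pscomp_of_X_pow_dvd hA hs, coeff_derivative]
  simp [coeff_X_pow_mul', coeff_pscomp, pow_succ, mul_assoc]

theorem coeff_add_assocDefect_sub_assocDefect (hA : X ^ d ∣ A) (hs : X ∣ s) (ht : X ∣ t)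
    (hn : n ≠ 0) (hst : X ^ (n + 1) ∣ s - t) :
    coeff (n + d) (assocDefect d A B s - assocDefect d A B t) =
      coeff d A * coeff 1 s ^ d * (n + d + 1 : ℕ) * coeff (n + 1) (s - t) := by
  have hc : coeff 1 t = coeff 1 s := (coeff_eq_of_X_pow_dvd_sub hst (by omega)).symm
  have hsplit : assocDefect d A B s - assocDefect d A B t =
      pscomp A s * d⁄dX ℂ (s - t) + (pscomp A s - pscomp A t) * d⁄dX ℂ t -
        X ^ d * (pscomp B s - pscomp B t) := by
    simp only [assocDefect, map_sub]
    ring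
  have hleading := coeff_add_mul_of_X_pow_dvd (X_pow_dvd_pscomp (s := s) hA)
    (X_pow_dvd_derivative hst)
  have hcorrection := coeff_add_mul_of_X_pow_dvd (X_pow_dvd_pscomp_sub_pscomp hA hs ht hst)
    (pow_zero (X : ℂ⟦X⟧) ▸ one_dvd (d⁄dX ℂ t))
  have hB := coeff_add_pscomp_sub_pscomp (F := B) (d := 0) (by simp) hs ht hn hst
  simp only [add_zero, CharP.cast_eq_zero, zero_mul, mul_zero] at hB
  rw [add_comm d n] at hleading
  rw [add_zero] at hcorrection
  rw [hsplit, map_sub, map_add, hleading, hcorrection, coeff_X_pow_mul, hB,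
    coeff_pscomp_of_X_pow_dvd hA hs, coeff_add_pscomp_sub_pscomp hA hs ht hn hst, coeff_derivative,
    coeff_derivative, hc]
  have hpow : (d : ℂ) * coeff 1 s ^ (d - 1) * coeff 1 s = d * coeff 1 s ^ d := by
    rcases d with _ | d <;> simp [pow_succ, mul_assoc]
  push_cast
  linear_combination coeff d A * coeff (n + 1) (s - t) * hpow

end assocDefect

section solutions

variable {d : ℕ} {A B : ℂ⟦X⟧}

theorem eq_of_assocDefect_eq_zero (hA : X ^ d ∣ A) (ha : coeff d A ≠ 0) {s t : ℂ⟦X⟧}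
    (hs : X ∣ s) (ht : X ∣ t) (hc : coeff 1 s ≠ 0) (hst : coeff 1 s = coeff 1 t)
    (hEs : assocDefect d A B s = 0) (hEt : assocDefect d A B t = 0) : s = t := by
  have hdvd : ∀ n, 1 ≤ n → X ^ (n + 1) ∣ s - t := by
    intro n hn
    induction n, hn using Nat.le_induction with
    | base =>
      refine X_pow_dvd_iff.mpr fun m hm => ?_
      interval_cases m
      · simp [X_dvd_iff.mp hs, X_dvd_iff.mp ht]
      · simp [hst]
    | succ n hn ih =>
      have hlin := coeff_add_assocDefect_sub_assocDefect (B := B) hA hs ht (by omega) ih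
      rw [hEs, hEt, sub_zero, map_zero, eq_comm] at hlin
      have hδ : coeff (n + 1) (s - t) = 0 :=
        (mul_eq_zero.mp hlin).resolve_left
          (mul_ne_zero (mul_ne_zero ha (pow_ne_zero _ hc)) (Nat.cast_ne_zero.mpr (by omega)))
      refine X_pow_dvd_iff.mpr fun m hm => ?_
      rcases lt_or_eq_of_le (Nat.lt_succ_iff.mp hm) with hm | rfl
      · exact X_pow_dvd_iff.mp ih m hm
      · exact hδ
  exact ext fun m => coeff_eq_of_X_pow_dvd_sub (hdvd (m + 1) (by omega)) (by omega)

variable (d A B) (c : ℂ)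

/-- The step `n → n + 1` chooses the coefficient of `t^(n + 2)` that kills the coefficient of
`t^(n + 1 + d)` of the defect, by `coeff_add_assocDefect_sub_assocDefect`. -/
noncomputable def approxSol : ℕ → ℂ⟦X⟧
  | 0 => C c * X
  | n + 1 => approxSol n +
      C (-coeff (n + 1 + d) (assocDefect d A B (approxSol n)) /
        (coeff d A * c ^ d * (n + 1 + d + 1 : ℕ))) * X ^ (n + 2)

noncomputable def assocSol : ℂ⟦X⟧ :=
  mk fun i => coeff i (approxSol d A B c i)

variable {d A B c}

theorem X_pow_dvd_approxSol_succ_sub (n : ℕ) :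
    X ^ (n + 2) ∣ approxSol d A B c (n + 1) - approxSol d A B c n := by
  rw [approxSol, add_sub_cancel_left]
  exact dvd_mul_left _ _

theorem X_pow_dvd_approxSol_sub {m n : ℕ} (h : n ≤ m) :
    X ^ (n + 2) ∣ approxSol d A B c m - approxSol d A B c n := by
  induction m, h using Nat.le_induction with
  | base => simp
  | succ m hnm ih =>
    rw [← sub_add_sub_cancel _ (approxSol d A B c m)]
    exact dvd_add ((pow_dvd_pow X (by omega)).trans (X_pow_dvd_approxSol_succ_sub m)) ih

theorem X_pow_dvd_assocSol_sub (n : ℕ) :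
    X ^ (n + 2) ∣ assocSol d A B c - approxSol d A B c n := by
  refine X_pow_dvd_iff.mpr fun m hm => ?_
  rw [map_sub, assocSol, coeff_mk, sub_eq_zero]
  rcases le_total m n with hmn | hnm
  · exact (coeff_eq_of_X_pow_dvd_sub (X_pow_dvd_approxSol_sub hmn) (by omega)).symm
  · exact coeff_eq_of_X_pow_dvd_sub (X_pow_dvd_approxSol_sub hnm) hm

theorem coeff_assocSol_of_lt_two {m : ℕ} (hm : m < 2) :
    coeff m (assocSol d A B c) = coeff m (C c * X) :=
  coeff_eq_of_X_pow_dvd_sub (X_pow_dvd_assocSol_sub 0) hm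

theorem X_dvd_assocSol : X ∣ assocSol d A B c := by
  rw [X_dvd_iff, ← coeff_zero_eq_constantCoeff_apply, coeff_assocSol_of_lt_two (by omega)]
  simp

theorem coeff_one_assocSol : coeff 1 (assocSol d A B c) = c := by
  simpa using coeff_assocSol_of_lt_two (m := 1) (by omega)

theorem X_dvd_approxSol (n : ℕ) : X ∣ approxSol d A B c n := by
  rw [← sub_sub_cancel (assocSol d A B c) (approxSol d A B c n)]
  exact dvd_sub X_dvd_assocSol ((dvd_pow_self X (by omega)).trans (X_pow_dvd_assocSol_sub n))

theorem assocDefect_assocSol (hA : X ^ d ∣ A) (ha : coeff d A ≠ 0) (hc : c ≠ 0)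
    (hac : coeff d A * c ^ (d + 1) = constantCoeff B) :
    assocDefect d A B (assocSol d A B c) = 0 := by
  have hs : X ∣ assocSol d A B c := X_dvd_assocSol
  have hs1 : coeff 1 (assocSol d A B c) = c := coeff_one_assocSol
  ext m
  rw [map_zero]
  rcases lt_trichotomy m d with hm | rfl | hm
  · exact X_pow_dvd_iff.mp (X_pow_dvd_assocDefect hA) m hm
  · rw [coeff_assocDefect hA hs, hs1, hac, sub_self]
  obtain ⟨n, rfl⟩ : ∃ n, m = n + 1 + d := ⟨m - d - 1, by omega⟩
  have hlin := coeff_add_assocDefect_sub_assocDefect (B := B) hA hs (X_dvd_approxSol n)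
    n.succ_ne_zero (X_pow_dvd_assocSol_sub n)
  have hstep : coeff (n + 2) (assocSol d A B c - approxSol d A B c n) =
      -coeff (n + 1 + d) (assocDefect d A B (approxSol d A B c n)) /
        (coeff d A * c ^ d * (n + 1 + d + 1 : ℕ)) := by
    rw [← sub_add_sub_cancel _ (approxSol d A B c (n + 1)), map_add,
      X_pow_dvd_iff.mp (X_pow_dvd_assocSol_sub (n + 1)) (n + 2) (by omega), zero_add,
      approxSol, add_sub_cancel_left, coeff_C_mul_X_pow, if_pos rfl]
  have hD : coeff d A * c ^ d * (n + 1 + d + 1 : ℕ) ≠ 0 :=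
    mul_ne_zero (mul_ne_zero ha (pow_ne_zero _ hc)) (Nat.cast_ne_zero.mpr (by omega))
  rw [hs1, hstep, mul_div_cancel₀ _ hD, map_sub] at hlin
  linear_combination hlin

end solutions

theorem ncard_setOf_pow_eq {n : ℕ} (hn : n ≠ 0) {r : ℂ} (hr : r ≠ 0) :
    {c : ℂ | c ^ n = r}.ncard = n := by
  classical
  have hζ := Complex.isPrimitiveRoot_exp n hn
  have hroots : {c : ℂ | c ^ n = r} = (Polynomial.nthRootsFinset n r : Set ℂ) := by
    ext c
    simp [Polynomial.mem_nthRootsFinset (Nat.pos_of_ne_zero hn)]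
  rw [hroots, Set.ncard_coe_finset, Polynomial.nthRootsFinset_def,
    Multiset.toFinset_card_of_nodup (hζ.nthRoots_nodup hr), hζ.card_nthRoots,
    if_pos (IsAlgClosed.exists_pow_nat_eq r (Nat.pos_of_ne_zero hn))]

noncomputable def assocSolutions (d : ℕ) (A B : ℂ⟦X⟧) : Set ℂ⟦X⟧ :=
  {s | (X ∣ s ∧ coeff 1 s ≠ 0) ∧ assocDefect d A B s = 0}

section count

variable {d : ℕ} {A B : ℂ⟦X⟧}

theorem coeff_one_pow_of_assocDefect_eq_zero (hA : X ^ d ∣ A) (ha : coeff d A ≠ 0) {s : ℂ⟦X⟧}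
    (hs : X ∣ s) (hE : assocDefect d A B s = 0) :
    coeff 1 s ^ (d + 1) = constantCoeff B / coeff d A := by
  rw [eq_div_iff ha, mul_comm, ← sub_eq_zero, ← coeff_assocDefect hA hs, hE, map_zero]

theorem injOn_coeff_one_assocSolutions (hA : X ^ d ∣ A) (ha : coeff d A ≠ 0) :
    Set.InjOn (coeff 1) (assocSolutions d A B) :=
  fun _ ⟨⟨hs, hc⟩, hEs⟩ _ ⟨⟨ht, _⟩, hEt⟩ hst => eq_of_assocDefect_eq_zero hA ha hs ht hc hst hEs hEt

theorem image_coeff_one_assocSolutions (hA : X ^ d ∣ A) (ha : coeff d A ≠ 0)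
    (hB : constantCoeff B ≠ 0) :
    coeff 1 '' assocSolutions d A B = {c : ℂ | c ^ (d + 1) = constantCoeff B / coeff d A} := by
  refine Set.Subset.antisymm (Set.image_subset_iff.mpr fun s ⟨⟨hs, _⟩, hE⟩ =>
    coeff_one_pow_of_assocDefect_eq_zero hA ha hs hE) fun c hc => ?_
  have hc : c ^ (d + 1) * coeff d A = constantCoeff B := (eq_div_iff ha).mp hc
  have hc0 : c ≠ 0 := by
    rintro rfl
    exact hB (by simpa using hc.symm)
  refine ⟨assocSol d A B c, ⟨⟨X_dvd_assocSol, by rwa [coeff_one_assocSol]⟩,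
    assocDefect_assocSol hA ha hc0 (by rw [mul_comm, hc])⟩, coeff_one_assocSol⟩

end count

/-- If `ord A = ν - 1` and `B(0) ≠ 0`, then the associated differential equation
`A(s(t)) s'(t) = t^{ν-1} B(s(t))` has exactly `ν` order-one formal power series
solutions, and each solution `s` satisfies `(coeff₁ s)^ν = B(0) / coeff_{ν-1}(A)`. -/
theorem assoc_equation_solution_count
    (ν : ℕ) (hν : 1 ≤ ν) (A B : PowerSeries ℂ)
    (hA : A.order = ((ν - 1 : ℕ)))
    (hB : PowerSeries.constantCoeff B ≠ 0) :
    {s : PowerSeries ℂ | s.order = 1 ∧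
        pscomp A s * s.derivativeFun = PowerSeries.X ^ (ν - 1) * pscomp B s}.ncard = ν ∧
    ∀ s : PowerSeries ℂ, s.order = 1 →
      pscomp A s * s.derivativeFun = PowerSeries.X ^ (ν - 1) * pscomp B s →
      (PowerSeries.coeff 1 s) ^ ν =
        PowerSeries.constantCoeff B / PowerSeries.coeff (ν - 1) A := by
  obtain ⟨d, rfl⟩ : ∃ d, ν = d + 1 := ⟨ν - 1, by omega⟩
  rw [Nat.add_sub_cancel] at hA ⊢
  obtain ⟨ha, hA⟩ := order_eq_nat.mp hA
  replace hA : X ^ d ∣ A := X_pow_dvd_iff.mpr hA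
  have hsolutions : {s : ℂ⟦X⟧ | s.order = 1 ∧ pscomp A s * s.derivativeFun = X ^ d * pscomp B s}
      = assocSolutions d A B :=
    Set.ext fun s => and_congr order_eq_one_iff sub_eq_zero.symm
  refine ⟨?_, fun s h1 hE => coeff_one_pow_of_assocDefect_eq_zero hA ha
    (order_eq_one_iff.mp h1).1 (sub_eq_zero.mpr hE)⟩
  rw [hsolutions, ← (injOn_coeff_one_assocSolutions hA ha).ncard_image,
    image_coeff_one_assocSolutions hA ha hB, ncard_setOf_pow_eq d.succ_ne_zero (div_ne_zero hB ha)]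
end
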